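/- arXiv:1611.09556 — 11 statements merged into one kernel-verified Lean document; each statement's English description precedes it below -/
import Mathlib

section
/- Let N and c be positive integers with N > c, and let α be a real number. Let Ω̃ ⊆ ℝ^{N+c}, with coordinates A_1,…,A_N,D_1,…,D_c, be the set defined by the inequalities A_1⋯A_N ≤ D_1⋯D_c; A_1 ≥ A_2 ≥ … ≥ A_N ≥ 1; D_1 ≥ D_2 ≥ … ≥ D_c; D_1 ≥ 2A_1; and D_j ≥ A_j for 2 ≤ j ≤ c. Define L(A_1,…,A_N,D_1,…,D_c) = Σ_{i=1}^N A_i − Σ_{j=1}^c D_j + α. Then for every non-empty closed subset Ω ⊆ Ω̃, the function L attains its maximum on Ω, i.e. there exists a point P ∈ Ω such that L(P') ≤ L(P) for all P' ∈ Ω. -/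
/-!
On the region, `D₁ ≥ 2A₁` and `D_j ≥ A_j` give `A₁ + ∑_{j ≤ c} A_j ≤ ∑ D`, so on a superlevel set
`∑ D ≤ ∑ A + β` of `L` the largest coordinate is controlled by the tail:
`A₁ ≤ (N - c) A_{c+1} + β`. Then `∑ D ≤ K A_{c+1}` for a constant `K`, and
`A_{c+1}^{c+1} ≤ ∏ A ≤ ∏ D ≤ (∑ D)^c ≤ (K A_{c+1})^c` bounds `A_{c+1}`, hence all coordinates.
So the superlevel sets of `L` on `Ω` are compact, and `L` attains its maximum.
-/

open Finset Bornology Filter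

theorem IsClosed.exists_isMaxOn_of_isBounded {X α : Type*} [PseudoMetricSpace X] [ProperSpace X]
    [LinearOrder α] [TopologicalSpace α] [ClosedIciTopology α] {s : Set X} {f : X → α} {x₀ : X}
    (hs : IsClosed s) (hf : ContinuousOn f s) (hx₀ : x₀ ∈ s)
    (hb : IsBounded (s ∩ {x | f x₀ ≤ f x})) : ∃ x ∈ s, IsMaxOn f s x := by
  refine hf.exists_isMaxOn' hs hx₀ ?_
  rw [eventually_inf_principal]
  filter_upwards [hb.isCompact_closure.compl_mem_cocompact] with x hx hxs
  by_contra! h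
  exact hx (subset_closure ⟨hxs, h.le⟩)

theorem Finset.add_sum_le_sum_of_le {ι M : Type*} [Fintype ι] [AddCommMonoid M] [PartialOrder M]
    [IsOrderedAddMonoid M] {f g : ι → M} {x : M} (j₀ : ι)
    (hfg : ∀ j, f j ≤ g j) (hj₀ : x + f j₀ ≤ g j₀) : x + ∑ j, f j ≤ ∑ j, g j := by
  classical
  rw [← add_sum_erase _ f (mem_univ j₀), ← add_sum_erase _ g (mem_univ j₀), ← add_assoc]
  exact add_le_add hj₀ (sum_le_sum fun j _ => hfg j)

theorem Finset.prod_le_sum_pow {ι : Type*} [Fintype ι] {f : ι → ℝ} (hf : ∀ i, 0 ≤ f i) :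
    ∏ i, f i ≤ (∑ i, f i) ^ Fintype.card ι :=
  calc ∏ i, f i ≤ ∏ _i : ι, ∑ j, f j :=
        prod_le_prod (fun i _ => hf i) fun i _ => single_le_sum (fun j _ => hf j) (mem_univ i)
    _ = (∑ i, f i) ^ Fintype.card ι := by rw [prod_const, card_univ]

theorem le_pow_of_pow_succ_le_mul_pow {u K : ℝ} {n : ℕ} (hu : 0 < u)
    (h : u ^ (n + 1) ≤ (K * u) ^ n) : u ≤ K ^ n := by
  rw [pow_succ', mul_pow] at h
  exact le_of_mul_le_mul_right h (pow_pos hu n)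

namespace Antitone

variable {N : ℕ} {A : Fin N → ℝ}

theorem sum_le_sum_castLE_add_mul (hA : Antitone A) {c : ℕ} (hNc : c < N) :
    ∑ i, A i ≤ ∑ j : Fin c, A (Fin.castLE hNc.le j) + ((N : ℝ) - c) * A ⟨c, hNc⟩ := by
  obtain ⟨m, rfl⟩ := Nat.exists_eq_add_of_le hNc.le
  rw [Fin.sum_univ_add]
  refine add_le_add le_rfl ?_
  calc ∑ i : Fin m, A (Fin.natAdd c i) ≤ #(univ : Finset (Fin m)) • A ⟨c, hNc⟩ :=
        sum_le_card_nsmul _ _ _ fun i _ => hA (Fin.le_def.2 (by simp))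
    _ = _ := by simp

theorem pow_le_prod (hA : Antitone A) (h1 : ∀ i, 1 ≤ A i) (k : Fin N) :
    A k ^ ((k : ℕ) + 1) ≤ ∏ i, A i :=
  calc A k ^ ((k : ℕ) + 1) = ∏ _i ∈ Iic k, A k := by rw [prod_const, Fin.card_Iic]
    _ ≤ ∏ i ∈ Iic k, A i :=
        prod_le_prod (fun _ _ => zero_le_one.trans (h1 k)) fun _ hi => hA (mem_Iic.1 hi)
    _ ≤ ∏ i, A i := prod_le_prod_of_subset_of_one_le (subset_univ _)
        (fun i _ => zero_le_one.trans (h1 i)) fun i _ _ => h1 i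

theorem sum_le_card_mul (hA : Antitone A) (h0 : 0 < N) : ∑ i, A i ≤ N * A ⟨0, h0⟩ := by
  simpa using sum_le_card_nsmul univ A _ fun i _ => hA (Fin.le_def.2 (Nat.zero_le _))

end Antitone

/-- The region `Ω̃`. -/
def admissibleSet {N c : ℕ} (hc : 0 < c) (hNc : c < N) : Set ((Fin N → ℝ) × (Fin c → ℝ)) :=
  {P | (∏ i, P.1 i ≤ ∏ j, P.2 j) ∧
      (∀ i j : Fin N, i ≤ j → P.1 j ≤ P.1 i) ∧
      (1 ≤ P.1 ⟨N - 1, Nat.sub_lt (hc.trans hNc) one_pos⟩) ∧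
      (∀ i j : Fin c, i ≤ j → P.2 j ≤ P.2 i) ∧
      (2 * P.1 ⟨0, hc.trans hNc⟩ ≤ P.2 ⟨0, hc⟩) ∧
      (∀ j : Fin c, 1 ≤ (j : ℕ) → P.1 ⟨(j : ℕ), j.isLt.trans hNc⟩ ≤ P.2 j)}

namespace admissibleSet

variable {N c : ℕ} {hc : 0 < c} {hNc : c < N} {P : (Fin N → ℝ) × (Fin c → ℝ)}

theorem antitone_fst (hP : P ∈ admissibleSet hc hNc) : Antitone P.1 := hP.2.1

theorem one_le_fst (hP : P ∈ admissibleSet hc hNc) (i : Fin N) : 1 ≤ P.1 i :=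
  hP.2.2.1.trans (hP.2.1 _ _ (Fin.le_def.2 (Nat.le_sub_one_of_lt i.isLt)))

theorem fst_castLE_le_snd (hP : P ∈ admissibleSet hc hNc) (j : Fin c) :
    P.1 (Fin.castLE hNc.le j) ≤ P.2 j := by
  rcases Nat.eq_zero_or_pos j with hj | hj
  · obtain rfl : j = ⟨0, hc⟩ := Fin.ext hj
    change P.1 ⟨0, hc.trans hNc⟩ ≤ P.2 ⟨0, hc⟩
    linarith [hP.2.2.2.2.1, one_le_fst hP ⟨0, hc.trans hNc⟩]
  · exact hP.2.2.2.2.2 j hj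

theorem add_sum_fst_castLE_le (hP : P ∈ admissibleSet hc hNc) :
    P.1 ⟨0, hc.trans hNc⟩ + ∑ j, P.1 (Fin.castLE hNc.le j) ≤ ∑ j, P.2 j :=
  Finset.add_sum_le_sum_of_le ⟨0, hc⟩ (fst_castLE_le_snd hP)
    (by change P.1 ⟨0, _⟩ + P.1 ⟨0, _⟩ ≤ P.2 ⟨0, hc⟩; linarith [hP.2.2.2.2.1])

theorem nonneg_snd (hP : P ∈ admissibleSet hc hNc) (j : Fin c) : 0 ≤ P.2 j :=
  zero_le_one.trans ((one_le_fst hP _).trans (fst_castLE_le_snd hP j))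

theorem fst_le (hP : P ∈ admissibleSet hc hNc) {β : ℝ} (hβ : 0 ≤ β)
    (hsum : ∑ j, P.2 j ≤ ∑ i, P.1 i + β) (i : Fin N) :
    P.1 i ≤ ((N : ℝ) - c) * ((N : ℝ) * (N - c) + (N + 1) * β) ^ c + β := by
  set u := P.1 ⟨c, hNc⟩
  set K := (N : ℝ) * (N - c) + (N + 1) * β
  have hA := antitone_fst hP
  have hu : 1 ≤ u := one_le_fst hP _
  have hA₀ : P.1 ⟨0, hc.trans hNc⟩ ≤ (N - c) * u + β := by
    linarith [add_sum_fst_castLE_le hP, hA.sum_le_sum_castLE_add_mul hNc]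
  have hsum_snd : ∑ j, P.2 j ≤ K * u :=
    calc ∑ j, P.2 j ≤ ∑ i, P.1 i + β := hsum
      _ ≤ N * P.1 ⟨0, hc.trans hNc⟩ + β := by gcongr; exact hA.sum_le_card_mul _
      _ ≤ N * ((N - c) * u + β) + β := by gcongr
      _ ≤ K * u := by nlinarith [mul_nonneg hβ (sub_nonneg.2 hu)]
  have huK : u ≤ K ^ c := le_pow_of_pow_succ_le_mul_pow (by linarith) <|
    calc u ^ (c + 1) ≤ ∏ i, P.1 i := hA.pow_le_prod (one_le_fst hP) ⟨c, hNc⟩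
      _ ≤ ∏ j, P.2 j := hP.1
      _ ≤ (∑ j, P.2 j) ^ c := by simpa using prod_le_sum_pow (nonneg_snd hP)
      _ ≤ (K * u) ^ c := by gcongr; exact sum_nonneg fun j _ => nonneg_snd hP j
  calc P.1 i ≤ P.1 ⟨0, hc.trans hNc⟩ := hA (Fin.le_def.2 (Nat.zero_le _))
    _ ≤ (N - c) * u + β := hA₀
    _ ≤ (N - c) * K ^ c + β := by gcongr; exact sub_nonneg.2 (mod_cast hNc.le)

theorem isBounded_inter_sum_snd_le (β : ℝ) :
    IsBounded (admissibleSet hc hNc ∩ {P | ∑ j, P.2 j ≤ ∑ i, P.1 i + β}) := by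
  set β' := max β 0
  set B := ((N : ℝ) - c) * ((N : ℝ) * (N - c) + (N + 1) * β') ^ c + β'
  refine (Metric.isBounded_Icc 0 ((fun _ => B, fun _ => N * B + β') :
    (Fin N → ℝ) × (Fin c → ℝ))).subset ?_
  rintro P ⟨hP, hsum⟩
  have hsum' : ∑ j, P.2 j ≤ ∑ i, P.1 i + β' := hsum.trans (by gcongr; exact le_max_left _ _)
  have hA : ∀ i, P.1 i ≤ B := fst_le hP (le_max_right _ _) hsum'
  refine ⟨⟨fun i => zero_le_one.trans (one_le_fst hP i), nonneg_snd hP⟩, ⟨hA, fun j => ?_⟩⟩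
  calc P.2 j ≤ ∑ j, P.2 j := single_le_sum (fun j _ => nonneg_snd hP j) (mem_univ j)
    _ ≤ ∑ i, P.1 i + β' := hsum'
    _ ≤ N * B + β' := by gcongr; simpa using sum_le_card_nsmul univ _ _ fun i _ => hA i

end admissibleSet

/-- Lemma on attainment of maximum.
Points of `ℝ^{N+c}` are encoded as pairs `P = (A, D)` with `A : Fin N → ℝ` and
`D : Fin c → ℝ` (so `A_1 = P.1 0`, …, `A_N = P.1 (N-1)` and similarly for `D`).
For every non-empty closed subset `Ω` of the region `Ω̃`, the linear function
`L(A, D) = Σ A_i − Σ D_j + α` attains its maximum on `Ω`. -/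
theorem stmt_0 (N c : ℕ) (hc : 0 < c) (hNc : c < N) (α : ℝ)
    (Ω : Set ((Fin N → ℝ) × (Fin c → ℝ)))
    (hsub : Ω ⊆ {P : (Fin N → ℝ) × (Fin c → ℝ) |
      (∏ i, P.1 i ≤ ∏ j, P.2 j) ∧
      (∀ i j : Fin N, i ≤ j → P.1 j ≤ P.1 i) ∧
      (1 ≤ P.1 ⟨N - 1, Nat.sub_lt (hc.trans hNc) one_pos⟩) ∧
      (∀ i j : Fin c, i ≤ j → P.2 j ≤ P.2 i) ∧
      (2 * P.1 ⟨0, hc.trans hNc⟩ ≤ P.2 ⟨0, hc⟩) ∧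
      (∀ j : Fin c, 1 ≤ (j : ℕ) → P.1 ⟨(j : ℕ), j.isLt.trans hNc⟩ ≤ P.2 j)})
    (hclosed : IsClosed Ω) (hne : Ω.Nonempty) :
    ∃ P ∈ Ω, ∀ P' ∈ Ω,
      (∑ i, P'.1 i - ∑ j, P'.2 j + α) ≤ (∑ i, P.1 i - ∑ j, P.2 j + α) := by
  obtain ⟨P₀, hP₀⟩ := hne
  let L : (Fin N → ℝ) × (Fin c → ℝ) → ℝ := fun P => ∑ i, P.1 i - ∑ j, P.2 j + α
  have hL : Continuous L := by fun_prop
  have hbdd : IsBounded (Ω ∩ {P | L P₀ ≤ L P}) :=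
    (admissibleSet.isBounded_inter_sum_snd_le (hNc := hNc) (α - L P₀)).subset
      fun P ⟨hPΩ, hPL⟩ => ⟨hsub hPΩ, by simp only [Set.mem_ofPred_eq, L] at hPL ⊢; linarith⟩
  obtain ⟨P, hP, hmax⟩ := hclosed.exists_isMaxOn_of_isBounded hL.continuousOn hP₀ hbdd
  exact ⟨P, hP, fun P' hP' => hmax hP'⟩
end

section
/- Let l ≥ 1 be an integer and r ≥ 0 an integer. Let Ω ⊆ ℝ² with coordinates (B,D) be the set defined by the inequalities B^l ≤ 2D^r and D ≥ B ≥ 1. Define L(B,D) = lB − rD − (l+1). Then L(B,D) ≤ 0 for every (B,D) ∈ Ω. Moreover, if (B,D) ∈ Ω and L(B,D) = 0, then l = 1, r = 0, and B = 2. -/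
/-!
For `r < l`, weighted AM-GM applied to the `l` numbers `2, D, …, D, 1, …, 1` (with `r` copies
of `D`) gives `B ^ l ≤ 2 * D ^ r ≤ ((r * D + l - r + 1) / l) ^ l`, hence `L(B, D) ≤ -r`.
Equality therefore forces `r = 0` and `B = 1 + 1 / l`, and then `B ^ l ≤ 2` rules out `l ≥ 2`
by the strict Bernoulli inequality `(1 + 1 / l) ^ l > 2`. For `r ≥ l` the bound `B ≤ D` alone
gives `L(B, D) ≤ (l - r) * D - (l + 1) < 0`.
-/

open Real

theorem pow_mul_pow_mul_pow_le_mean_pow {x y z : ℝ} (hx : 0 ≤ x) (hy : 0 ≤ y) (hz : 0 ≤ z)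
    {a b c n : ℕ} (habc : a + b + c = n) (hn : 0 < n) :
    x ^ a * y ^ b * z ^ c ≤ ((a * x + b * y + c * z) / n) ^ n := by
  have hn0 : (0 : ℝ) < n := by exact_mod_cast hn
  have hsum : (a : ℝ) + b + c = n := by exact_mod_cast habc
  have hmean := geom_mean_le_arith_mean3_weighted (w₁ := a / n) (w₂ := b / n) (w₃ := c / n)
    (by positivity) (by positivity) (by positivity) hx hy hz (by field_simp; exact hsum)
  have hpow (t : ℝ) (ht : 0 ≤ t) (k : ℕ) : (t ^ ((k : ℝ) / n)) ^ n = t ^ k := by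
    rw [← rpow_mul_natCast ht, div_mul_cancel₀ _ hn0.ne', rpow_natCast]
  calc x ^ a * y ^ b * z ^ c
      = (x ^ ((a : ℝ) / n) * y ^ ((b : ℝ) / n) * z ^ ((c : ℝ) / n)) ^ n := by
        rw [mul_pow, mul_pow, hpow x hx, hpow y hy, hpow z hz]
    _ ≤ (a / n * x + b / n * y + c / n * z) ^ n := pow_le_pow_left₀ (by positivity) hmean _
    _ = ((a * x + b * y + c * z) / n) ^ n := by congr 1; field_simp

theorem mul_le_of_pow_le_two_mul_pow {l r : ℕ} (hrl : r < l) {B D : ℝ} (hB : 0 ≤ B)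
    (hD : 0 ≤ D) (h : B ^ l ≤ 2 * D ^ r) : l * B ≤ r * D + (l - r) + 1 := by
  have hl : (0 : ℝ) < l := by exact_mod_cast Nat.zero_lt_of_lt hrl
  have hamgm := pow_mul_pow_mul_pow_le_mean_pow zero_le_two hD zero_le_one
    (a := 1) (b := r) (c := l - 1 - r) (by omega) (Nat.zero_lt_of_lt hrl)
  rw [Nat.cast_sub (by omega), Nat.cast_sub (by omega)] at hamgm
  simp only [pow_one, one_pow, mul_one, one_mul, Nat.cast_one] at hamgm
  have hrl' : (r : ℝ) + 1 ≤ l := by exact_mod_cast hrl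
  have hmean_nonneg : 0 ≤ (2 + r * D + (l - 1 - r)) / (l : ℝ) :=
    div_nonneg (by nlinarith) hl.le
  have hB_le := (pow_le_pow_iff_left₀ hB hmean_nonneg (by omega)).mp (h.trans hamgm)
  rw [le_div_iff₀ hl] at hB_le
  linarith

theorem two_lt_one_add_inv_pow {n : ℕ} (hn : 2 ≤ n) : 2 < (1 + (n : ℝ)⁻¹) ^ n := by
  have hn0 : (n : ℝ) ≠ 0 := by positivity
  have hbernoulli := one_add_mul_self_lt_rpow_one_add (s := (n : ℝ)⁻¹) (p := n)
    (by linarith [inv_nonneg.mpr (Nat.cast_nonneg (α := ℝ) n)]) (inv_ne_zero hn0)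
    (by exact_mod_cast hn)
  rwa [mul_inv_cancel₀ hn0, one_add_one_eq_two, rpow_natCast] at hbernoulli

theorem stmt_1_general (l r : ℕ) (B D : ℝ)
    (h1 : B ^ l ≤ 2 * D ^ r) (h2 : 1 ≤ B) (h3 : B ≤ D) :
    (l : ℝ) * B - (r : ℝ) * D - ((l : ℝ) + 1) ≤ 0 ∧
      ((l : ℝ) * B - (r : ℝ) * D - ((l : ℝ) + 1) = 0 → l = 1 ∧ r = 0 ∧ B = 2) := by
  have hD : 0 ≤ D := by linarith
  rcases lt_or_ge r l with hrl | hlr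
  · have hL := mul_le_of_pow_le_two_mul_pow hrl (by linarith) hD h1
    refine ⟨by linarith [r.cast_nonneg (α := ℝ)], fun hL0 ↦ ?_⟩
    obtain rfl : r = 0 := by exact_mod_cast (by linarith [r.cast_nonneg (α := ℝ)] : (r : ℝ) = 0)
    have hl0 : (l : ℝ) ≠ 0 := by exact_mod_cast hrl.ne'
    rw [Nat.cast_zero, zero_mul, sub_zero] at hL0
    have hB : B = 1 + (l : ℝ)⁻¹ := by field_simp; linarith
    obtain rfl : l = 1 := by
      by_contra hl1
      have := two_lt_one_add_inv_pow (n := l) (by omega)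
      rw [pow_zero, mul_one, hB] at h1
      linarith
    exact ⟨rfl, rfl, by norm_num [hB]⟩
  · have hlr' : (l : ℝ) ≤ r := by exact_mod_cast hlr
    have hL : (l : ℝ) * B - r * D - (l + 1) < 0 := by nlinarith
    exact ⟨hL.le, fun hL0 ↦ absurd hL0 hL.ne⟩

/-- For integers `l ≥ 1`, `r ≥ 0` and reals `(B, D)` with
`B^l ≤ 2 D^r` and `D ≥ B ≥ 1`, the function `L(B,D) = lB − rD − (l+1)` is
non-positive; moreover, if `L(B,D) = 0` then `l = 1`, `r = 0` and `B = 2`. -/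
theorem stmt_1 (l r : ℕ) (hl : 1 ≤ l) (B D : ℝ)
    (h1 : B ^ l ≤ 2 * D ^ r) (h2 : 1 ≤ B) (h3 : B ≤ D) :
    (l : ℝ) * B - (r : ℝ) * D - ((l : ℝ) + 1) ≤ 0 ∧
      ((l : ℝ) * B - (r : ℝ) * D - ((l : ℝ) + 1) = 0 → l = 1 ∧ r = 0 ∧ B = 2) :=
  stmt_1_general l r B D h1 h2 h3
end

section
/- Let k be a positive integer, l a non-negative integer, and p a non-negative real number such that k + l + p > 2; let r be a non-negative integer. Let Ω ⊆ ℝ³ with coordinates (A,B,D) be the set defined by the inequalities A^{k−1}B^l ≤ 2D^r, A ≥ B ≥ 1, A ≥ k + l + p, D ≥ B, together with the additional inequality D ≥ A in the case k ≥ 2. Define L(A,B,D) = (k−2)A + lB − rD + p. Then L(A,B,D) ≤ 0 for every (A,B,D) ∈ Ω. Moreover, if (A,B,D) ∈ Ω and L(A,B,D) = 0, then A = p + 2 and p > 0. -/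
/-!
Write `k = a + 1`. The constraints say that the `a + l` numbers `A, …, A, B, …, B` all lie in
`[1, D]` and have product at most `2 D^r`. Repeatedly merging two such numbers — into `x y` when
`x y ≤ D`, and into `x y / D` while consuming one factor `D` otherwise — never decreases the sum
of the `x - 1`, so that sum is at most `r (D - 1) + 1`. This is exactly `L ≤ k + l + p - A - r`.
Equality forces `r = 0`, `A = k + l + p > 2`, and `a (A - 1) + l (B - 1) = 1`, hence `a = 0`;
then `B^l ≤ 2 = 1 + l (B - 1)` contradicts the strict Bernoulli inequality unless `l = 1`.
-/

open Set

namespace List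

variable {K : Type*} [Field K] [LinearOrder K] [IsStrictOrderedRing K]

theorem sum_map_sub_one_le_prod_sub_one {s : List K} (hs : ∀ x ∈ s, 1 ≤ x) :
    (s.map (· - 1)).sum ≤ s.prod - 1 := by
  induction s with
  | nil => simp
  | cons a t ih =>
    have ha : 1 ≤ a := hs a mem_cons_self
    have ht := ih fun x hx => hs x (mem_cons_of_mem a hx)
    have hsum : 0 ≤ (t.map (· - 1)).sum :=
      sum_nonneg fun z hz => by
        obtain ⟨w, hw, rfl⟩ := mem_map.mp hz
        exact sub_nonneg.mpr (hs w (mem_cons_of_mem a hw))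
    simp only [map_cons, sum_cons, prod_cons]
    nlinarith

theorem sum_map_sub_one_le_of_prod_le {D c : K} (hD : 1 ≤ D) (hc : 1 ≤ c) {s : List K}
    (hs : ∀ x ∈ s, x ∈ Icc 1 D) {r : ℕ} (h : s.prod ≤ c * D ^ r) :
    (s.map (· - 1)).sum ≤ r * (D - 1) + c - 1 := by
  have of_pow_zero {t : List K} (ht : ∀ x ∈ t, x ∈ Icc 1 D) (h : t.prod ≤ c * D ^ 0) :
      (t.map (· - 1)).sum ≤ (0 : ℕ) * (D - 1) + c - 1 := by
    simpa using (sum_map_sub_one_le_prod_sub_one fun x hx => (ht x hx).1).trans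
      (sub_le_sub_right (by simpa using h) 1)
  rcases s with _ | ⟨y, u⟩
  · simp only [map_nil, sum_nil]
    nlinarith [mul_nonneg r.cast_nonneg (sub_nonneg.mpr hD)]
  induction u generalizing y r with
  | nil =>
    rcases r with _ | q
    · exact of_pow_zero hs h
    simp only [map_cons, map_nil, sum_cons, sum_nil, add_zero, Nat.cast_succ]
    nlinarith [mul_nonneg q.cast_nonneg (sub_nonneg.mpr hD), (hs y mem_cons_self).2]
  | cons x u ih =>
    rcases r with _ | q
    · exact of_pow_zero hs h
    obtain ⟨⟨hy1, hyD⟩, ⟨hx1, hxD⟩, hu⟩ := forall_mem_cons.1 hs |>.imp_right forall_mem_cons.1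
    simp only [map_cons, sum_cons, prod_cons] at h ⊢
    by_cases hxy : x * y ≤ D
    · have := ih (x * y) (forall_mem_cons.2 ⟨⟨one_le_mul_of_one_le_of_one_le hx1 hy1, hxy⟩, hu⟩)
        (r := q + 1) (by rwa [prod_cons, mul_assoc, mul_left_comm])
      simp only [map_cons, sum_cons] at this
      nlinarith [mul_nonneg (sub_nonneg.mpr hx1) (sub_nonneg.mpr hy1)]
    · have hD0 : 0 < D := by linarith
      obtain ⟨z, hz⟩ : ∃ z, z * D = x * y := ⟨x * y / D, div_mul_cancel₀ _ hD0.ne'⟩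
      have hz1 : 1 ≤ z := le_of_mul_le_mul_right (by linarith) hD0
      have hzD : z ≤ D := le_of_mul_le_mul_right (by rw [hz]; gcongr) hD0
      have hprod : z * u.prod ≤ c * D ^ q := by
        refine le_of_mul_le_mul_right ?_ hD0
        calc z * u.prod * D = y * (x * u.prod) := by rw [mul_right_comm, hz]; ring
          _ ≤ c * D ^ q * D := by rwa [mul_assoc, ← pow_succ]
      have := ih z (forall_mem_cons.2 ⟨⟨hz1, hzD⟩, hu⟩) hprod
      simp only [map_cons, sum_cons] at this
      -- `(D - x) * (D - y) ≥ 0` with `x * y = z * D` gives `x + y ≤ z + D`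
      have hxy_le : x + y ≤ z + D := by
        nlinarith [mul_nonneg (sub_nonneg.mpr hxD) (sub_nonneg.mpr hyD)]
      push_cast
      linarith

end List

theorem one_add_mul_sub_lt_pow {B : ℝ} (hB : 1 < B) {n : ℕ} (hn : 2 ≤ n) :
    1 + n * (B - 1) < B ^ n := by
  have := one_add_mul_self_lt_rpow_one_add (s := B - 1) (by linarith) (by linarith)
    (p := n) (by exact_mod_cast hn)
  rwa [add_sub_cancel, Real.rpow_natCast] at this

theorem stmt_2_general (k l r : ℕ) (hk : 1 ≤ k) (p : ℝ)
    (hklp : 2 < (k : ℝ) + (l : ℝ) + p)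
    (A B D : ℝ)
    (h1 : A ^ (k - 1) * B ^ l ≤ 2 * D ^ r)
    (h2 : B ≤ A) (h3 : 1 ≤ B)
    (h4 : (k : ℝ) + (l : ℝ) + p ≤ A)
    (h5 : B ≤ D)
    (h6 : 2 ≤ k → A ≤ D) :
    ((k : ℝ) - 2) * A + (l : ℝ) * B - (r : ℝ) * D + p ≤ 0 ∧
      (((k : ℝ) - 2) * A + (l : ℝ) * B - (r : ℝ) * D + p = 0 → A = p + 2 ∧ 0 < p) := by
  obtain ⟨a, rfl⟩ : ∃ a, k = a + 1 := ⟨k - 1, by omega⟩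
  rw [Nat.add_sub_cancel] at h1
  push_cast at hklp h4 ⊢
  have hsum : a * (A - 1) + l * (B - 1) ≤ r * (D - 1) + 1 := by
    have hs : ∀ x ∈ List.replicate a A ++ List.replicate l B, x ∈ Icc 1 D := by
      simp only [List.mem_append, List.mem_replicate]
      rintro x (⟨ha, rfl⟩ | ⟨-, rfl⟩)
      exacts [⟨h3.trans h2, h6 (by omega)⟩, ⟨h3, h5⟩]
    have := List.sum_map_sub_one_le_of_prod_le (h3.trans h5) one_le_two hs
      (by simpa [List.prod_replicate] using h1)
    simp only [List.map_append, List.map_replicate, List.sum_append, List.sum_replicate,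
      nsmul_eq_mul] at this
    linarith
  have hr : (0 : ℝ) ≤ r := r.cast_nonneg
  refine ⟨by linarith, fun hL => ?_⟩
  obtain rfl : r = 0 := Nat.cast_eq_zero.1 (by linarith : (r : ℝ) = 0)
  simp only [Nat.cast_zero, zero_mul, pow_zero, mul_one] at hsum hL h1
  have hA : A = a + 1 + l + p := by linarith
  have hsum1 : a * (A - 1) + l * (B - 1) = 1 := by linarith
  obtain rfl : a = 0 := by
    by_contra ha
    have : (1 : ℝ) ≤ a := Nat.one_le_cast.2 (Nat.one_le_iff_ne_zero.2 ha)
    nlinarith [mul_nonneg l.cast_nonneg (sub_nonneg.2 h3)]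
  simp only [Nat.cast_zero, zero_mul, zero_add, pow_zero, one_mul] at hsum1 h1 hA hklp
  obtain rfl : l = 1 := by
    have hB : 1 < B := lt_of_le_of_ne h3 (by rintro rfl; simp at hsum1)
    by_contra hl
    have hl0 : l ≠ 0 := by rintro rfl; simp at hsum1
    linarith [one_add_mul_sub_lt_pow hB (by omega : 2 ≤ l)]
  simp only [Nat.cast_one] at hA hklp
  constructor <;> linarith

/-- Let `k ≥ 1`, `l ≥ 0`, `r ≥ 0` be integers and `p ≥ 0` a real
number with `k + l + p > 2`. For reals `(A, B, D)` with `A^{k−1} B^l ≤ 2 D^r`,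
`A ≥ B ≥ 1`, `A ≥ k + l + p`, `D ≥ B`, and additionally `D ≥ A` if `k ≥ 2`,
the function `L(A,B,D) = (k−2)A + lB − rD + p` is non-positive; moreover, if
`L(A,B,D) = 0` then `A = p + 2` and `p > 0`. -/
theorem stmt_2 (k l r : ℕ) (hk : 1 ≤ k) (p : ℝ) (hp : 0 ≤ p)
    (hklp : 2 < (k : ℝ) + (l : ℝ) + p)
    (A B D : ℝ)
    (h1 : A ^ (k - 1) * B ^ l ≤ 2 * D ^ r)
    (h2 : B ≤ A) (h3 : 1 ≤ B)
    (h4 : (k : ℝ) + (l : ℝ) + p ≤ A)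
    (h5 : B ≤ D)
    (h6 : 2 ≤ k → A ≤ D) :
    ((k : ℝ) - 2) * A + (l : ℝ) * B - (r : ℝ) * D + p ≤ 0 ∧
      (((k : ℝ) - 2) * A + (l : ℝ) * B - (r : ℝ) * D + p = 0 → A = p + 2 ∧ 0 < p) :=
  stmt_2_general k l r hk p hklp A B D h1 h2 h3 h4 h5 h6
end

section
/- Let k and c be positive integers, and let l be a non-negative real number such that k + l > 2. Let Ω ⊆ ℝ² with coordinates (A,D) be the set defined by the inequalities A^k ≤ D^c, D ≥ 2A, and A ≥ k + l. Define L(A,D) = kA − cD + l. Then L(A,D) < 0 for every (A,D) ∈ Ω. -/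
/-- Let `k, c` be positive integers and `l ≥ 0` a real number
with `k + l > 2`. For reals `(A, D)` with `A^k ≤ D^c`, `D ≥ 2A`, and
`A ≥ k + l`, one has `L(A,D) = kA − cD + l < 0`. -/
theorem stmt_3 (k c : ℕ) (hk : 0 < k) (hc : 0 < c) (l : ℝ) (hl : 0 ≤ l)
    (hkl : 2 < (k : ℝ) + l) (A D : ℝ)
    (h1 : A ^ k ≤ D ^ c) (h2 : 2 * A ≤ D) (h3 : (k : ℝ) + l ≤ A) :
    (k : ℝ) * A - (c : ℝ) * D + l < 0 := by
  have hA2 : (2:ℝ) < A := lt_of_lt_of_le hkl h3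
  have hA0 : (0:ℝ) < A := by linarith
  have hD : (0:ℝ) < D := by linarith
  have hAk : (k:ℝ) ≤ A := by linarith
  have hlA : l ≤ A - k := by linarith
  have hk1 : (1:ℝ) ≤ k := by exact_mod_cast hk
  rcases le_or_gt (k+1) (2*c) with hcase | hcase
  · have hc' : ((k:ℝ)+1) ≤ 2*c := by exact_mod_cast hcase
    have hc0 : (0:ℝ) ≤ c := Nat.cast_nonneg c
    nlinarith [mul_le_mul_of_nonneg_left h2 hc0]
  · have h2ck : 2*c ≤ k := by omega
    have hA1 : (1:ℝ) ≤ A := by linarith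
    have hpow : A^(2*c) ≤ A^k := pow_le_pow_right₀ hA1 h2ck
    have hsq : A^2 ≤ D := by
      have h1' : (A^2)^c ≤ D^c := by
        rw [← pow_mul]; exact le_trans hpow h1
      exact le_of_pow_le_pow_left₀ hc.ne' hD.le h1'
    rcases le_or_gt 2 c with hc2 | hc2
    · have hc2' : (2:ℝ) ≤ c := by exact_mod_cast hc2
      nlinarith [mul_le_mul_of_nonneg_left hsq (by linarith : (0:ℝ) ≤ (c:ℝ))]
    · have hc1 : c = 1 := by omega
      subst hc1
      simp only [pow_one, Nat.cast_one, one_mul] at h1 ⊢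
      rcases le_or_gt 3 k with hk3 | hk3
      · have hk3' : (3:ℝ) ≤ k := by exact_mod_cast hk3
        have hA3 : (3:ℝ) ≤ A := by linarith
        have hpow3 : A^3 ≤ A^k := pow_le_pow_right₀ hA1 hk3
        nlinarith [hpow3, mul_nonneg (mul_nonneg (by linarith : (0:ℝ) ≤ A - 3) hA0.le) hA0.le,
          mul_nonneg (by linarith : (0:ℝ) ≤ A - (k:ℝ)) hA0.le]
      · have hk2 : k = 2 := by omega
        subst hk2
        push_cast at hlA ⊢
        nlinarith [mul_pos (by linarith : (0:ℝ) < A - 1) (by linarith : (0:ℝ) < A - 2)]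
end

section
/- Let k be a positive integer, let l be a non-negative integer such that k + l > 2, and let c be a non-negative integer. Let Ω ⊆ ℝ³ with coordinates (A,B,D) be the set defined by the inequalities A^k B^l ≤ D^c, D ≥ 2A, A ≥ B ≥ 1, and A ≥ k + l. Define L(A,B,D) = kA + lB − cD. Then L(A,B,D) < 0 for every (A,B,D) ∈ Ω. -/
/-!
Suppose `c D ≤ k A + l B`. Then `D ≥ 2 A` gives `2 c A ≤ k A + l B`, while
`A^k B^l ≤ D^c` gives `c^c A^k B^l ≤ (k A + l B)^c`; we show that these are incompatible.
If `2 c ≤ k`, this follows from `k A + l B ≤ (k + l) A ≤ A^2`. Otherwise let `m = 2 c - k ≥ 1`: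
then `m A ≤ l B`, so `m (k A + l B) ≤ 2 c l B`, and it remains to see `(2 l B)^c < m^c A^k B^l`.
For `l < c` this holds because `2 l < A`. For `c ≤ l` the extreme case is `B = m A / l`,
`A = k + l`, where it becomes the integer inequality `2^c l^l < m^l (k + l)^(k + l - c)`,
which rests on `2 l^l < (l + 1)^l` and on `(1 + 1/x)^d ≤ e < 3` for `d ≤ x`.
-/

theorem two_mul_pow_self_lt_add_one_pow {l : ℕ} (hl : 2 ≤ l) : 2 * l ^ l < (l + 1) ^ l := by
  have hl0 : (0 : ℝ) < l := by positivity
  have hbern : 1 + (l : ℝ) * (l : ℝ)⁻¹ < (1 + (l : ℝ)⁻¹) ^ (l : ℝ) :=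
    one_add_mul_self_lt_rpow_one_add (by linarith [inv_pos.2 hl0]) (inv_ne_zero hl0.ne')
      (by exact_mod_cast hl)
  rw [Real.rpow_natCast, mul_inv_cancel₀ hl0.ne', one_add_one_eq_two] at hbern
  have hreal : 2 * (l : ℝ) ^ l < ((l : ℝ) + 1) ^ l := calc
    2 * (l : ℝ) ^ l < (1 + (l : ℝ)⁻¹) ^ l * (l : ℝ) ^ l := by gcongr
    _ = ((l : ℝ) + 1) ^ l := by rw [← mul_pow]; field_simp
  exact_mod_cast hreal

theorem add_one_pow_le_three_mul_pow {x d : ℕ} (h : d ≤ x) : (x + 1) ^ d ≤ 3 * x ^ d := by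
  rcases Nat.eq_zero_or_pos x with rfl | hx
  · simp_all
  have hx' : (0 : ℝ) < x := by exact_mod_cast hx
  have hreal : ((x : ℝ) + 1) ^ d ≤ 3 * (x : ℝ) ^ d := calc
    ((x : ℝ) + 1) ^ d = (1 + (x : ℝ)⁻¹) ^ d * (x : ℝ) ^ d := by
      rw [← mul_pow]; field_simp
    _ ≤ (1 + (x : ℝ)⁻¹) ^ x * (x : ℝ) ^ d := by
      gcongr
      simp
    _ ≤ Real.exp 1 * (x : ℝ) ^ d := by gcongr; exact Real.one_add_inv_pow_le_exp
    _ ≤ 3 * (x : ℝ) ^ d := by gcongr; exact Real.exp_one_lt_three.le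
  exact_mod_cast hreal

theorem add_pow_le_pow_add {m d : ℕ} (hm : 3 ≤ m) (hd : d ≤ m) (j : ℕ) :
    (m + j) ^ d ≤ m ^ (d + j) := by
  induction j with
  | zero => simp
  | succ j ih => calc
    (m + (j + 1)) ^ d = (m + j + 1) ^ d := by ring
    _ ≤ 3 * (m + j) ^ d := add_one_pow_le_three_mul_pow (by omega)
    _ ≤ m * m ^ (d + j) := Nat.mul_le_mul hm ih
    _ = m ^ (d + (j + 1)) := by ring

section

variable {k l c m : ℕ} {A B : ℝ}

theorem two_pow_mul_pow_self_lt_of_le (hm : 1 ≤ m) (hkm : k + m = 2 * c)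
    (hml : m ≤ l) (hcl : c ≤ l) (hck : c ≤ k) (hn : 3 ≤ k + l) :
    2 ^ c * l ^ l < m ^ l * (k + l) ^ (k + l - c) := by
  have hm2 : 2 ^ (m - 1) ≤ m ^ l := by
    rcases Nat.eq_or_lt_of_le hm with rfl | hm
    · simp
    · calc 2 ^ (m - 1) ≤ 2 ^ l := Nat.pow_le_pow_right (by norm_num) (by omega)
        _ ≤ m ^ l := Nat.pow_le_pow_left hm l
  have hn2 : 2 ^ (k - c) ≤ (k + l) ^ (k - c) := Nat.pow_le_pow_left (by omega) _
  have hnl : (l + 1) ^ l ≤ (k + l) ^ l := Nat.pow_le_pow_left (by omega) _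
  calc 2 ^ c * l ^ l = 2 ^ ((m - 1) + (k - c) + 1) * l ^ l := by congr 2; omega
    _ = 2 ^ (m - 1) * 2 ^ (k - c) * (2 * l ^ l) := by ring
    _ < 2 ^ (m - 1) * 2 ^ (k - c) * (l + 1) ^ l := by
        gcongr; exact two_mul_pow_self_lt_add_one_pow (by omega)
    _ ≤ m ^ l * (k + l) ^ (k - c) * (k + l) ^ l := by gcongr
    _ = m ^ l * (k + l) ^ (k + l - c) := by
        rw [mul_assoc, ← pow_add]; congr 2; omega

theorem two_pow_mul_pow_self_lt_of_lt (hk : 1 ≤ k) (hkm : k + m = 2 * c)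
    (hml : m ≤ l) (hkc : k < c) :
    2 ^ c * l ^ l < m ^ l * (k + l) ^ (k + l - c) := by
  obtain ⟨j, rfl⟩ := Nat.exists_eq_add_of_le hml
  have hld : (m + j) ^ (c - k) ≤ m ^ (m + j - c) := by
    have := add_pow_le_pow_add (m := m) (d := c - k) (by omega) (by omega) j
    rwa [show c - k + j = m + j - c by omega] at this
  have h2c : 2 ^ c * (m + j) ^ (c - k) ≤ m ^ (m + j) := calc
    2 ^ c * (m + j) ^ (c - k) ≤ m ^ c * m ^ (m + j - c) := by
      gcongr
      omega
    _ = m ^ (m + j) := by rw [← pow_add]; congr 1; omega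
  calc 2 ^ c * (m + j) ^ (m + j) = 2 ^ c * (m + j) ^ (c - k) * (m + j) ^ (k + (m + j) - c) := by
        rw [mul_assoc, ← pow_add]; congr 2; omega
    _ < m ^ (m + j) * (k + (m + j)) ^ (k + (m + j) - c) := by
        apply Nat.mul_lt_mul_of_le_of_lt h2c
        · exact Nat.pow_lt_pow_left (by omega) (by omega)
        · exact pow_pos (by omega) _

theorem two_pow_mul_pow_self_lt (hk : 1 ≤ k) (hm : 1 ≤ m) (hkm : k + m = 2 * c)
    (hml : m ≤ l) (hcl : c ≤ l) (hn : 3 ≤ k + l) :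
    2 ^ c * l ^ l < m ^ l * (k + l) ^ (k + l - c) := by
  rcases le_or_gt c k with hck | hkc
  · exact two_pow_mul_pow_self_lt_of_le hm hkm hml hcl hck hn
  · exact two_pow_mul_pow_self_lt_of_lt hk hkm hml hkc

theorem two_mul_pow_lt_of_le (hk : 1 ≤ k) (hm : 1 ≤ m) (hkm : k + m = 2 * c) (hml : m ≤ l)
    (hcl : c ≤ l) (hn : 3 ≤ k + l) (hA : (k + l : ℝ) ≤ A) (hB : 0 < B)
    (hmA : m * A ≤ l * B) :
    (2 * l * B) ^ c < m ^ c * (A ^ k * B ^ l) := by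
  obtain ⟨e, hle⟩ := Nat.exists_eq_add_of_le hcl
  have hnum : (2 : ℝ) ^ c * (l : ℝ) ^ l < m ^ l * A ^ (k + e) := by
    have h := two_pow_mul_pow_self_lt hk hm hkm hml hcl hn
    rw [show k + l - c = k + e by omega] at h
    calc (2 : ℝ) ^ c * (l : ℝ) ^ l < m ^ l * ((k + l : ℕ) : ℝ) ^ (k + e) := by exact_mod_cast h
      _ ≤ m ^ l * A ^ (k + e) := by gcongr; push_cast; exact hA
  have hA0 : 0 ≤ A := le_trans (by positivity) hA
  have hl : (0 : ℝ) < l := by exact_mod_cast (show 0 < l by omega)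
  have split {x : ℝ} : x ^ l = x ^ c * x ^ e := by rw [hle, pow_add]
  refine lt_of_mul_lt_mul_right ?_ (pow_nonneg hl.le e)
  calc (2 * l * B) ^ c * (l : ℝ) ^ e = 2 ^ c * (l : ℝ) ^ l * B ^ c := by rw [split]; ring
    _ < m ^ l * A ^ (k + e) * B ^ c := by gcongr
    _ = m ^ c * A ^ k * B ^ c * (m * A) ^ e := by rw [split]; ring
    _ ≤ m ^ c * A ^ k * B ^ c * (l * B) ^ e := by gcongr
    _ = m ^ c * (A ^ k * B ^ l) * (l : ℝ) ^ e := by rw [split (x := B)]; ring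

theorem two_mul_pow_lt_of_lt (hm : 1 ≤ m) (hkm : k + m = 2 * c) (hml : m ≤ l) (hlc : l < c)
    (hA : (k + l : ℝ) ≤ A) (hB : 0 < B) (hBA : B ≤ A) :
    (2 * l * B) ^ c < m ^ c * (A ^ k * B ^ l) := by
  obtain ⟨p, hcp⟩ := Nat.exists_eq_add_of_le hlc.le
  have h2l : 2 * (l : ℝ) < A := by
    have : 2 * l < k + l := by omega
    calc 2 * (l : ℝ) < k + l := by exact_mod_cast this
      _ ≤ A := hA
  have hA1 : 1 ≤ A := by
    have : (1 : ℝ) ≤ k := by exact_mod_cast (show 1 ≤ k by omega)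
    linarith [(Nat.cast_nonneg l : (0 : ℝ) ≤ l)]
  calc (2 * l * B) ^ c = (2 * l) ^ c * B ^ l * B ^ p := by rw [hcp]; ring
    _ ≤ (2 * l) ^ c * B ^ l * A ^ p := by gcongr
    _ < A ^ c * B ^ l * A ^ p := by gcongr; omega
    _ = A ^ (c + p) * B ^ l := by ring
    _ ≤ A ^ k * B ^ l := by gcongr; omega
    _ ≤ m ^ c * (A ^ k * B ^ l) := by
        refine le_mul_of_one_le_left (by positivity) (one_le_pow₀ ?_)
        exact_mod_cast hm

theorem mul_add_mul_pow_lt_of_lt_two_mul (hk : 1 ≤ k) (hm : 1 ≤ m) (hkm : k + m = 2 * c)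
    (hn : 3 ≤ k + l) (hA : (k + l : ℝ) ≤ A) (hB : 0 < B) (hBA : B ≤ A) (hmA : m * A ≤ l * B) :
    (k * A + l * B) ^ c < c ^ c * (A ^ k * B ^ l) := by
  have hA0 : 0 < A := hB.trans_le hBA
  have hml : m ≤ l := by
    have : (m : ℝ) * A ≤ l * A := hmA.trans (by gcongr)
    exact_mod_cast le_of_mul_le_mul_right this hA0
  have hc : 0 < c := by omega
  have hreduced : (2 * l * B) ^ c < m ^ c * (A ^ k * B ^ l) := by
    rcases le_or_gt c l with hcl | hlc
    · exact two_mul_pow_lt_of_le hk hm hkm hml hcl hn hA hB hmA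
    · exact two_mul_pow_lt_of_lt hm hkm hml hlc hA hB hBA
  have hkmR : (k : ℝ) + m = 2 * c := by exact_mod_cast hkm
  have hmul : m * (k * A + l * B) ≤ c * (2 * l * B) := calc
    m * (k * A + l * B) = k * (m * A) + m * (l * B) := by ring
    _ ≤ k * (l * B) + m * (l * B) := by gcongr
    _ = c * (2 * l * B) := by linear_combination (l * B) * hkmR
  refine lt_of_mul_lt_mul_left (a := (m : ℝ) ^ c) ?_ (by positivity)
  calc (m : ℝ) ^ c * (k * A + l * B) ^ c = (m * (k * A + l * B)) ^ c := (mul_pow _ _ _).symm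
    _ ≤ (c * (2 * l * B)) ^ c := by gcongr
    _ = c ^ c * (2 * l * B) ^ c := mul_pow _ _ _
    _ < c ^ c * (m ^ c * (A ^ k * B ^ l)) := by gcongr
    _ = m ^ c * (c ^ c * (A ^ k * B ^ l)) := by ring

theorem mul_add_mul_lt_pow_mul_pow (hk : 2 ≤ k) (hn : 3 ≤ k + l) (hA : (k + l : ℝ) ≤ A)
    (hB : 1 ≤ B) (hBA : B ≤ A) : k * A + l * B < A ^ k * B ^ l := by
  have hA3 : 3 ≤ A := le_trans (by exact_mod_cast hn) hA
  have hsq : A ^ 2 ≤ A ^ k := pow_le_pow_right₀ (by linarith) hk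
  rcases Nat.eq_zero_or_pos l with rfl | hl
  · have hkA : (k : ℝ) ≤ A := by simpa using hA
    calc k * A + (0 : ℕ) * B ≤ A ^ 2 := by push_cast; nlinarith
      _ < A ^ k := pow_lt_pow_right₀ (by linarith) (by omega)
      _ = A ^ k * B ^ 0 := by simp
  · have hBl : B ≤ B ^ l := le_self_pow₀ hB hl.ne'
    have hlR : (0 : ℝ) < l := by exact_mod_cast hl
    calc k * A + l * B < k * (A * B ^ l) + l * (A * B ^ l) := by
          refine add_lt_add_of_le_of_lt ?_ ?_
          · gcongr
            exact le_mul_of_one_le_right (by linarith) (one_le_pow₀ hB)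
          · gcongr
            calc B ≤ B ^ l := hBl
              _ < A * B ^ l := lt_mul_of_one_lt_left (by positivity) (by linarith)
      _ = (k + l) * A * B ^ l := by ring
      _ ≤ A ^ 2 * B ^ l := by gcongr; nlinarith
      _ ≤ A ^ k * B ^ l := by gcongr

theorem mul_add_mul_pow_lt_of_two_mul_le (hc : 1 ≤ c) (h2c : 2 * c ≤ k) (hn : 3 ≤ k + l)
    (hA : (k + l : ℝ) ≤ A) (hB : 1 ≤ B) (hBA : B ≤ A) :
    (k * A + l * B) ^ c < c ^ c * (A ^ k * B ^ l) := by
  rcases hc.eq_or_lt with rfl | hc2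
  · simpa using mul_add_mul_lt_pow_mul_pow (by omega) hn hA hB hBA
  have hA1 : 1 ≤ A := hB.trans hBA
  have hcR : (1 : ℝ) < c := by exact_mod_cast hc2
  have hsum : k * A + l * B ≤ A * A := by nlinarith
  calc (k * A + l * B) ^ c ≤ (A * A) ^ c := by gcongr
    _ < (c * (A * A)) ^ c :=
        pow_lt_pow_left₀ (lt_mul_of_one_lt_left (by positivity) hcR) (by positivity) (by omega)
    _ = c ^ c * A ^ (2 * c) := by ring
    _ ≤ c ^ c * A ^ k := by gcongr
    _ ≤ c ^ c * (A ^ k * B ^ l) := by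
        gcongr; exact le_mul_of_one_le_right (by positivity) (one_le_pow₀ hB)

theorem mul_add_mul_pow_lt (hk : 1 ≤ k) (hc : 1 ≤ c) (hn : 3 ≤ k + l) (hA : (k + l : ℝ) ≤ A)
    (hB : 1 ≤ B) (hBA : B ≤ A) (h2c : 2 * c * A ≤ k * A + l * B) :
    (k * A + l * B) ^ c < c ^ c * (A ^ k * B ^ l) := by
  rcases le_or_gt (2 * c) k with hck | hkc
  · exact mul_add_mul_pow_lt_of_two_mul_le hc hck hn hA hB hBA
  obtain ⟨m, hkm⟩ := Nat.exists_eq_add_of_le hkc.le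
  have hkmR : (2 * c : ℝ) = k + m := by exact_mod_cast hkm
  refine mul_add_mul_pow_lt_of_lt_two_mul hk (by omega) hkm.symm hn hA (by linarith) hBA ?_
  linear_combination h2c - A * hkmR

end

/-- Let `k ≥ 1`, `l ≥ 0`, `c ≥ 0` be integers with `k + l > 2`.
For reals `(A, B, D)` with `A^k B^l ≤ D^c`, `D ≥ 2A`, `A ≥ B ≥ 1`, and
`A ≥ k + l`, one has `L(A,B,D) = kA + lB − cD < 0`. -/
theorem stmt_4 (k l c : ℕ) (hk : 1 ≤ k) (hkl : 2 < k + l)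
    (A B D : ℝ)
    (h1 : A ^ k * B ^ l ≤ D ^ c) (h2 : 2 * A ≤ D)
    (h3 : B ≤ A) (h4 : 1 ≤ B) (h5 : (k : ℝ) + (l : ℝ) ≤ A) :
    (k : ℝ) * A + (l : ℝ) * B - (c : ℝ) * D < 0 := by
  by_contra hcon
  have hsum : c * D ≤ k * A + l * B := by linarith [not_lt.1 hcon]
  have hA1 : 1 < A := by
    have : (2 : ℝ) < k + l := by exact_mod_cast hkl
    linarith
  have hc : 1 ≤ c := by
    refine Nat.one_le_iff_ne_zero.2 fun hc0 => ?_
    subst hc0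
    have : 1 < A ^ k * B ^ l := one_lt_mul_of_lt_of_le (one_lt_pow₀ hA1 (by omega)) (one_le_pow₀ h4)
    simp only [pow_zero] at h1
    linarith
  have h2c : 2 * c * A ≤ k * A + l * B := by
    linarith [mul_le_mul_of_nonneg_left h2 (Nat.cast_nonneg (α := ℝ) c)]
  have hkey := mul_add_mul_pow_lt hk hc hkl h5 h4 h3 h2c
  have hD : (c : ℝ) ^ c * (A ^ k * B ^ l) ≤ (k * A + l * B) ^ c := calc
    (c : ℝ) ^ c * (A ^ k * B ^ l) ≤ c ^ c * D ^ c := by gcongr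
    _ = (c * D) ^ c := (mul_pow _ _ _).symm
    _ ≤ (k * A + l * B) ^ c := by
        gcongr
        exact mul_nonneg (Nat.cast_nonneg c) (by linarith)
  linarith
end

section
/- Let m be a positive integer and let u ∈ ℝ^m be a vector whose coordinates satisfy 0 ≤ u^(1) ≤ u^(2) ≤ … ≤ u^(m). Let e_1,…,e_m denote the standard basis vectors of ℝ^m. Put u_{−1} = −e_1, u_0 = e_1, u_i = −e_i + e_{i+1} for 1 ≤ i ≤ m−1, and u_m = −e_m. Let Λ ⊆ {−1, 0, 1, …, m}. Suppose that λu + Σ_{i∈Λ} λ_i u_i = (1,1,…,1) for some non-negative real number λ and some positive real numbers λ_i (i ∈ Λ). Then there exist indices 0 ≤ p ≤ q ≤ m such that u^(p+1) = u^(p+2) = … = u^(q) (i.e. all coordinates of u with indices strictly between p and q+1 are equal) and {0, 1, …, p−1} ∪ {q+1, …, m} ⊆ Λ. -/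
/-- The vectors `u_{-1} = -e_1`, `u_0 = e_1`, `u_i = -e_i + e_{i+1}`
(for `1 ≤ i ≤ m-1`) and `u_m = -e_m` of Lemma "go-up", given by their
(1-based) coordinates: `uvecUp m i j` is the `j`-th coordinate of `u_i`. -/
noncomputable def uvecUp (m : ℕ) (i : ℤ) : ℕ → ℝ := fun j =>
  if i = -1 then (if j = 1 then -1 else 0)
  else if i = 0 then (if j = 1 then 1 else 0)
  else if i = (m : ℤ) then (if j = m then -1 else 0)
  else (if (j : ℤ) = i then -1 else 0) + (if (j : ℤ) = i + 1 then 1 else 0)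

/-!
Extend `λ_i` by zero to a nonnegative function `A` on `{-1, …, m}`. Read coordinatewise, the
hypothesis says that the increment `A j - A (j - 1)` equals `λ u^(j) - 1` (minus `A (-1)` when
`j = 1`); these increments grow with `j`, so `A` is discretely convex on `{0, …, m}`. A
nonnegative convex function vanishes on the whole segment `[p, q]` between its first and its last
zero, and is nonzero (so the index lies in `Λ`) outside it. On `(p, q]` the increments vanish,
which forces `λ u^(j) = 1` there (up to the `A (-1)` correction at `j = 1`), so `u` is constant on
that range. If `A` has no zero at all, `p = q = m` works.
-/

open Finset

section DiscreteConvex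

variable {α : Type*} [AddCommGroup α] [LinearOrder α] [IsOrderedAddMonoid α] {f : ℕ → α}

theorem eqOn_zero_of_monotoneOn_sub {p q : ℕ}
    (hconv : MonotoneOn (fun k => f (k + 1) - f k) (Set.Ico p q))
    (hnonneg : ∀ n ∈ Set.Icc p q, 0 ≤ f n) (hp : f p = 0) (hq : f q = 0) :
    Set.EqOn f 0 (Set.Icc p q) := by
  rintro n ⟨hpn, hnq⟩
  refine le_antisymm (not_lt.1 fun hpos => ?_) (hnonneg n ⟨hpn, hnq⟩)
  obtain ⟨k, hk, hdk⟩ : ∃ k ∈ Ico p n, 0 < f (k + 1) - f k := by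
    by_contra! hnonpos
    have := sum_nonpos hnonpos
    rw [sum_Ico_sub f hpn, hp, sub_zero] at this
    exact hpos.not_ge this
  have hk' := mem_Ico.1 hk
  -- Past `k` all increments are at least the positive one at `k`, so `f` cannot come back to `0`.
  have hrise : 0 ≤ f q - f n := by
    rw [← sum_Ico_sub f hnq]
    refine sum_nonneg fun l hl => ?_
    have hl' := mem_Ico.1 hl
    exact hdk.le.trans (hconv ⟨hk'.1, by omega⟩ ⟨by omega, hl'.2⟩ (by omega))
  rw [hq, zero_sub, neg_nonneg] at hrise
  exact hpos.not_ge hrise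

theorem exists_flat_block_of_monotoneOn_sub {m : ℕ}
    (hconv : MonotoneOn (fun k => f (k + 1) - f k) (Set.Iio m)) (hnonneg : ∀ n ≤ m, 0 ≤ f n) :
    ∃ p q, p ≤ q ∧ q ≤ m ∧ (∀ n < p, f n ≠ 0) ∧ (∀ n, q < n → n ≤ m → f n ≠ 0) ∧
      ∀ k ∈ Set.Ico p q, f (k + 1) = f k := by
  classical
  by_cases hZ : ∃ n ≤ m, f n = 0
  · obtain ⟨hpm, hp⟩ := Nat.find_spec hZ
    set q := Nat.findGreatest (fun n => f n = 0) m
    have hqm : q ≤ m := Nat.findGreatest_le m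
    have hzero := eqOn_zero_of_monotoneOn_sub
      (hconv.mono fun k hk => lt_of_lt_of_le hk.2 hqm)
      (fun n hn => hnonneg n (hn.2.trans hqm)) hp
      (Nat.findGreatest_spec (P := fun n => f n = 0) hpm hp)
    refine ⟨Nat.find hZ, q, Nat.le_findGreatest hpm hp, hqm,
      fun n hn h => Nat.find_min hZ hn ⟨by omega, h⟩,
      fun n hqn hnm => Nat.findGreatest_is_greatest hqn hnm, fun k ⟨hpk, hkq⟩ => ?_⟩
    exact (hzero ⟨by omega, hkq⟩).trans (hzero ⟨hpk, hkq.le⟩).symm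
  · push Not at hZ
    exact ⟨m, m, le_rfl, le_rfl, fun n hn => hZ n hn.le, fun n h1 h2 => absurd h2 (by omega),
      fun k hk => absurd hk.2 (not_lt.2 hk.1)⟩

end DiscreteConvex

theorem uvecUp_succ {m k : ℕ} (i : ℤ) (hk : k < m) :
    uvecUp m i (k + 1) = (if i = k then 1 else 0) - (if i = k + 1 then 1 else 0) -
      if k = 0 then (if i = -1 then 1 else 0) else 0 := by
  unfold uvecUp
  split_ifs <;> first | (norm_num; done) | (exfalso; omega)

theorem sum_mul_uvecUp_succ {m k : ℕ} (Λ : Finset ℤ) (lam : ℤ → ℝ) (hk : k < m) :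
    ∑ i ∈ Λ, lam i * uvecUp m i (k + 1) =
      (Λ : Set ℤ).indicator lam k - (Λ : Set ℤ).indicator lam (k + 1) -
        if k = 0 then (Λ : Set ℤ).indicator lam (-1) else 0 := by
  simp only [uvecUp_succ _ hk, mul_sub, mul_ite, mul_one, mul_zero, sum_sub_distrib, sum_ite_eq',
    Set.indicator_apply, mem_coe]
  split_ifs <;> simp_all

theorem monotoneOn_mul_sub_ite {m : ℕ} {u : ℕ → ℝ} {lam0 c : ℝ}
    (hmono : ∀ i j : ℕ, 1 ≤ i → i ≤ j → j ≤ m → u i ≤ u j)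
    (hlam0 : 0 ≤ lam0) (hc : 0 ≤ c) :
    MonotoneOn (fun k : ℕ => lam0 * u (k + 1) - 1 - if k = 0 then c else 0) (Set.Iio m) := by
  intro j hj k hk hjk
  have hu := mul_le_mul_of_nonneg_left
    (hmono (j + 1) (k + 1) (by omega) (by omega) (Set.mem_Iio.1 hk)) hlam0
  rcases Nat.eq_zero_or_pos k with rfl | hk0
  · obtain rfl : j = 0 := by omega
    exact le_rfl
  · simp only [if_neg hk0.ne']
    split_ifs <;> linarith

theorem eq_of_mul_eq_one_add_ite {m : ℕ} {u : ℕ → ℝ} {lam0 c : ℝ}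
    (hmono : ∀ i j : ℕ, 1 ≤ i → i ≤ j → j ≤ m → u i ≤ u j)
    (hlam0 : 0 ≤ lam0) (hc : 0 ≤ c) {p q : ℕ} (hqm : q ≤ m)
    (hblock : ∀ k ∈ Set.Ico p q, lam0 * u (k + 1) = 1 + if k = 0 then c else 0) :
    ∀ a b : ℕ, p + 1 ≤ a → a ≤ q → p + 1 ≤ b → b ≤ q → u a = u b := by
  intro a b hpa haq hpb hbq
  wlog hab : a ≤ b generalizing a b
  · exact (this b a hpb hbq hpa haq (le_of_not_ge hab)).symm
  rcases hab.eq_or_lt with rfl | hab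
  · rfl
  have hb : lam0 * u b = 1 := by
    have := hblock (b - 1) ⟨by omega, by omega⟩
    rwa [Nat.sub_add_cancel (by omega), if_neg (by omega), add_zero] at this
  have ha : 1 ≤ lam0 * u a := by
    have := hblock (a - 1) ⟨by omega, by omega⟩
    rw [Nat.sub_add_cancel (by omega)] at this
    split_ifs at this <;> linarith
  have hpos : 0 < lam0 := hlam0.lt_of_ne (by rintro rfl; simp at hb)
  exact (hmono a b (by omega) hab.le (by omega)).antisymm
    (le_of_mul_le_mul_left (hb.trans_le ha) hpos)

theorem stmt_5_general (m : ℕ) (u : ℕ → ℝ)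
    (hmono : ∀ i j : ℕ, 1 ≤ i → i ≤ j → j ≤ m → u i ≤ u j)
    (Λ : Finset ℤ)
    (lam0 : ℝ) (hlam0 : 0 ≤ lam0)
    (lam : ℤ → ℝ) (hlam : ∀ i ∈ Λ, 0 < lam i)
    (heq : ∀ j : ℕ, 1 ≤ j → j ≤ m →
      lam0 * u j + ∑ i ∈ Λ, lam i * uvecUp m i j = 1) :
    ∃ p q : ℕ, p ≤ q ∧ q ≤ m ∧
      (∀ a b : ℕ, p + 1 ≤ a → a ≤ q → p + 1 ≤ b → b ≤ q → u a = u b) ∧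
      (∀ i : ℤ, ((0 ≤ i ∧ i ≤ (p : ℤ) - 1) ∨ ((q : ℤ) + 1 ≤ i ∧ i ≤ (m : ℤ))) →
        i ∈ Λ) := by
  set A := (Λ : Set ℤ).indicator lam
  have hA : ∀ i, 0 ≤ A i := Set.indicator_nonneg fun i hi => (hlam i hi).le
  have hincr : ∀ k < m, A (k + 1) - A k = lam0 * u (k + 1) - 1 - if k = 0 then A (-1) else 0 := by
    intro k hk
    have hcoord := heq (k + 1) (by omega) hk
    rw [sum_mul_uvecUp_succ Λ lam hk] at hcoord
    linarith
  obtain ⟨p, q, hpq, hqm, hbelow, habove, hflat⟩ :=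
    exists_flat_block_of_monotoneOn_sub (f := fun n : ℕ => A n)
      ((monotoneOn_mul_sub_ite hmono hlam0 (hA (-1))).congr fun k hk => by
        simpa using (hincr k hk).symm)
      fun n _ => hA n
  refine ⟨p, q, hpq, hqm, eq_of_mul_eq_one_add_ite hmono hlam0 (hA (-1)) hqm fun k hk => ?_, ?_⟩
  · have hstep := hincr k (hk.2.trans_le hqm)
    have hflat_k := hflat k hk
    push_cast at hflat_k
    linarith
  · rintro i (⟨h0, hi⟩ | ⟨hi, him⟩)
    · lift i to ℕ using h0
      exact Set.mem_of_indicator_ne_zero (hbelow i (by omega))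
    · lift i to ℕ using (by omega)
      exact Set.mem_of_indicator_ne_zero (habove i (by omega) (by omega))

/-- Lemma "go-up".  A vector `v ∈ ℝ^m` is encoded by
`v : ℕ → ℝ`, its coordinates being `v 1, …, v m` (values outside `[1, m]`
are irrelevant: all hypotheses and conclusions only concern `1 ≤ j ≤ m`).
Let `0 ≤ u^(1) ≤ … ≤ u^(m)`, let `Λ ⊆ {-1, 0, …, m}`, and suppose
`λ u + Σ_{i ∈ Λ} λ_i u_i = (1, …, 1)` with `λ ≥ 0` and `λ_i > 0` for `i ∈ Λ`.
Then there exist indices `0 ≤ p ≤ q ≤ m` such that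
`u^(p+1) = … = u^(q)` and `{0, …, p-1} ∪ {q+1, …, m} ⊆ Λ`. -/
theorem stmt_5 (m : ℕ) (hm : 0 < m) (u : ℕ → ℝ)
    (h0 : 0 ≤ u 1)
    (hmono : ∀ i j : ℕ, 1 ≤ i → i ≤ j → j ≤ m → u i ≤ u j)
    (Λ : Finset ℤ) (hΛ : ∀ i ∈ Λ, -1 ≤ i ∧ i ≤ (m : ℤ))
    (lam0 : ℝ) (hlam0 : 0 ≤ lam0)
    (lam : ℤ → ℝ) (hlam : ∀ i ∈ Λ, 0 < lam i)
    (heq : ∀ j : ℕ, 1 ≤ j → j ≤ m →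
      lam0 * u j + ∑ i ∈ Λ, lam i * uvecUp m i j = 1) :
    ∃ p q : ℕ, p ≤ q ∧ q ≤ m ∧
      (∀ a b : ℕ, p + 1 ≤ a → a ≤ q → p + 1 ≤ b → b ≤ q → u a = u b) ∧
      (∀ i : ℤ, ((0 ≤ i ∧ i ≤ (p : ℤ) - 1) ∨ ((q : ℤ) + 1 ≤ i ∧ i ≤ (m : ℤ))) →
        i ∈ Λ) :=
  stmt_5_general m u hmono Λ lam0 hlam0 lam hlam heq
end

section
/- Let m be a positive integer and let u ∈ ℝ^m be a vector whose coordinates satisfy 0 ≥ u^(1) ≥ u^(2) ≥ … ≥ u^(m). Let e_1,…,e_m denote the standard basis vectors of ℝ^m. Put u_0 = −e_1 and u_i = −e_i + e_{i+1} for 1 ≤ i ≤ m−1. Let Λ ⊆ {0, 1, …, m−1}. Suppose that λu + Σ_{i∈Λ} λ_i u_i = (−1,−1,…,−1) for some non-negative real number λ and some positive real numbers λ_i (i ∈ Λ). Then at least one of the following holds: (i) 0 ∈ Λ and u^(2) = u^(3) = … = u^(m); (ii) u^(1) = u^(2) = … = u^(m); (iii) {1, 2, …, m−1} ⊆ Λ;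 (iv) {0, 2, 3, …, m−1} ⊆ Λ. -/
/-- The vectors `u_0 = -e_1` and `u_i = -e_i + e_{i+1}` (for `1 ≤ i ≤ m-1`)
of Lemma "go-down", given by their (1-based) coordinates:
`uvecDown i j` is the `j`-th coordinate of `u_i`. -/
noncomputable def uvecDown (i : ℕ) : ℕ → ℝ := fun j =>
  if i = 0 then (if j = 1 then -1 else 0)
  else (if j = i then -1 else 0) + (if j = i + 1 then 1 else 0)

/-- Auxiliary: `Lf Λ lam j` is `lam j` if `j ∈ Λ`, else `0`. -/
noncomputable def Lf (Λ : Finset ℕ) (lam : ℕ → ℝ) (j : ℕ) : ℝ :=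
  if j ∈ Λ then lam j else 0

/-- Auxiliary: `Af lam0 u t = -1 - lam0 * u t`. -/
noncomputable def Af (lam0 : ℝ) (u : ℕ → ℝ) (t : ℕ) : ℝ :=
  -1 - lam0 * u t

/-- Auxiliary: a monotone sequence with nonneg sum on `(r,k]`, zero sum on
`(k,m]`, and `a (k+1) ≤ 0` vanishes on `(r, m]`. -/
lemma zero_on_interval (a : ℕ → ℝ) (r k m : ℕ) (hrk : r < k) (hkm : k < m)
    (mono : ∀ p q : ℕ, r < p → p ≤ q → q ≤ m → a p ≤ a q)
    (h1 : 0 ≤ ∑ t ∈ Finset.Ioc r k, a t)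
    (h2 : ∑ t ∈ Finset.Ioc k m, a t = 0)
    (h3 : a (k + 1) ≤ 0) :
    ∀ t : ℕ, r < t → t ≤ m → a t = 0 := by
  have hnonpos : ∀ t ∈ Finset.Ioc r k, a t ≤ 0 := by
    intro t ht
    rw [Finset.mem_Ioc] at ht
    exact le_trans (mono t (k + 1) ht.1 (by omega) (by omega)) h3
  have hsum0 : ∑ t ∈ Finset.Ioc r k, a t = 0 :=
    le_antisymm (Finset.sum_nonpos hnonpos) h1
  have hzero1 : ∀ t ∈ Finset.Ioc r k, a t = 0 :=
    (Finset.sum_eq_zero_iff_of_nonpos hnonpos).mp hsum0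
  have hak : a k = 0 := hzero1 k (by simp [Finset.mem_Ioc]; omega)
  have hak1 : a (k + 1) = 0 :=
    le_antisymm h3 (hak ▸ mono k (k + 1) hrk (by omega) (by omega))
  have hnonneg : ∀ t ∈ Finset.Ioc k m, 0 ≤ a t := by
    intro t ht
    rw [Finset.mem_Ioc] at ht
    exact hak1 ▸ mono (k + 1) t (by omega) (by omega) ht.2
  have hzero2 := (Finset.sum_eq_zero_iff_of_nonneg hnonneg).mp h2
  intro t hrt htm
  by_cases h : t ≤ k
  · exact hzero1 t (by simp [Finset.mem_Ioc]; omega)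
  · exact hzero2 t (by simp [Finset.mem_Ioc]; omega)

/-- Lemma "go-down".  A vector `v ∈ ℝ^m` is encoded by
`v : ℕ → ℝ`, its coordinates being `v 1, …, v m` (values outside `[1, m]`
are irrelevant: all hypotheses and conclusions only concern `1 ≤ j ≤ m`).
Let `0 ≥ u^(1) ≥ … ≥ u^(m)`, let `Λ ⊆ {0, 1, …, m-1}`, and suppose
`λ u + Σ_{i ∈ Λ} λ_i u_i = (-1, …, -1)` with `λ ≥ 0` and `λ_i > 0` for
`i ∈ Λ`.  Then one of the following holds:
(i) `0 ∈ Λ` and `u^(2) = … = u^(m)`; (ii) `u^(1) = … = u^(m)`;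
(iii) `{1, …, m-1} ⊆ Λ`; (iv) `{0, 2, 3, …, m-1} ⊆ Λ`. -/
theorem stmt_6 (m : ℕ) (hm : 0 < m) (u : ℕ → ℝ)
    (h0 : u 1 ≤ 0)
    (hanti : ∀ i j : ℕ, 1 ≤ i → i ≤ j → j ≤ m → u j ≤ u i)
    (Λ : Finset ℕ) (hΛ : ∀ i ∈ Λ, i ≤ m - 1)
    (lam0 : ℝ) (hlam0 : 0 ≤ lam0)
    (lam : ℕ → ℝ) (hlam : ∀ i ∈ Λ, 0 < lam i)
    (heq : ∀ j : ℕ, 1 ≤ j → j ≤ m →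
      lam0 * u j + ∑ i ∈ Λ, lam i * uvecDown i j = -1) :
    (0 ∈ Λ ∧ ∀ a b : ℕ, 2 ≤ a → a ≤ m → 2 ≤ b → b ≤ m → u a = u b) ∨
    (∀ a b : ℕ, 1 ≤ a → a ≤ m → 1 ≤ b → b ≤ m → u a = u b) ∨
    (∀ i : ℕ, 1 ≤ i → i ≤ m - 1 → i ∈ Λ) ∨
    (0 ∈ Λ ∧ ∀ i : ℕ, 2 ≤ i → i ≤ m - 1 → i ∈ Λ) := by
  classical
  have hLnn : ∀ j, 0 ≤ Lf Λ lam j := by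
    intro j
    unfold Lf
    split
    · exact (hlam j ‹_›).le
    · exact le_rfl
  have hLzero : ∀ j, j ∉ Λ → Lf Λ lam j = 0 := by
    intro j hj; unfold Lf; rw [if_neg hj]
  have hmΛ : m ∉ Λ := fun h => by have := hΛ m h; omega
  -- coordinate 1 equation
  have hkey_sum1 : (∑ i ∈ Λ, lam i * uvecDown i 1)
      = -(Lf Λ lam 0 + Lf Λ lam 1) := by
    have hpt : ∀ i, lam i * uvecDown i 1 =
        -((if i = 0 then lam i else 0) + (if i = 1 then lam i else 0)) := by
      intro i
      simp only [uvecDown]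
      split_ifs <;> first | ring1 | (exfalso; omega)
    rw [Finset.sum_congr rfl (fun i _ => hpt i), Finset.sum_neg_distrib,
        Finset.sum_add_distrib, Finset.sum_ite_eq', Finset.sum_ite_eq']
    rfl
  have heq1 : lam0 * u 1 + -(Lf Λ lam 0 + Lf Λ lam 1) = -1 := by
    have h := heq 1 le_rfl hm
    rwa [hkey_sum1] at h
  -- coordinate j equation, j ≥ 2
  have hkey_sumj : ∀ j, 2 ≤ j → (∑ i ∈ Λ, lam i * uvecDown i j)
      = Lf Λ lam (j - 1) - Lf Λ lam j := by
    intro j hj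
    have hpt : ∀ i, lam i * uvecDown i j =
        (if i = j - 1 then lam i else 0) - (if i = j then lam i else 0) := by
      intro i
      simp only [uvecDown]
      split_ifs <;> first | ring1 | (exfalso; omega)
    rw [Finset.sum_congr rfl (fun i _ => hpt i), Finset.sum_sub_distrib,
        Finset.sum_ite_eq', Finset.sum_ite_eq']
    rfl
  have heqj : ∀ j, 2 ≤ j → j ≤ m →
      Lf Λ lam (j - 1) = Af lam0 u j + Lf Λ lam j := by
    intro j h2 hjm
    have h := heq j (by omega) hjm
    rw [hkey_sumj j h2] at h
    unfold Af
    linarith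
  -- suffix-sum identity
  have key : ∀ d j, m - j ≤ d → 1 ≤ j → j ≤ m →
      Lf Λ lam j = ∑ t ∈ Finset.Ioc j m, Af lam0 u t := by
    intro d
    induction d with
    | zero =>
      intro j hd h1 h2
      have : j = m := by omega
      subst this
      rw [Finset.Ioc_self, Finset.sum_empty]
      exact hLzero _ hmΛ
    | succ n ih =>
      intro j hd h1 h2
      rcases eq_or_lt_of_le h2 with rfl | hlt
      · rw [Finset.Ioc_self, Finset.sum_empty]
        exact hLzero _ hmΛ
      · have hsplit : Finset.Ioc j m = insert (j + 1) (Finset.Ioc (j + 1) m) := by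
          ext x; simp only [Finset.mem_Ioc, Finset.mem_insert]; omega
        rw [hsplit, Finset.sum_insert (by simp),
          ← ih (j + 1) (by omega) (by omega) (by omega)]
        have h := heqj (j + 1) (by omega) (by omega)
        simpa using h
  have key' : ∀ j, 1 ≤ j → j ≤ m →
      Lf Λ lam j = ∑ t ∈ Finset.Ioc j m, Af lam0 u t :=
    fun j h1 h2 => key (m - j) j le_rfl h1 h2
  -- monotonicity of Af
  have hmono : ∀ p q : ℕ, 1 ≤ p → p ≤ q → q ≤ m → Af lam0 u p ≤ Af lam0 u q := by
    intro p q h1 h2 h3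
    have hu := hanti p q h1 h2 h3
    have := mul_le_mul_of_nonneg_left hu hlam0
    unfold Af
    linarith
  have hL1 : Lf Λ lam 1 = ∑ t ∈ Finset.Ioc 1 m, Af lam0 u t := key' 1 le_rfl hm
  by_cases h0Λ : 0 ∈ Λ
  · -- case 0 ∈ Λ : (iv) or (i)
    by_cases hall : ∀ i : ℕ, 2 ≤ i → i ≤ m - 1 → i ∈ Λ
    · exact Or.inr (Or.inr (Or.inr ⟨h0Λ, hall⟩))
    · push_neg at hall
      obtain ⟨k, hk2, hk1, hkΛ⟩ := hall
      left
      refine ⟨h0Λ, ?_⟩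
      have hkm : k < m := by omega
      have hLk : (∑ t ∈ Finset.Ioc k m, Af lam0 u t) = 0 := by
        rw [← key' k (by omega) (by omega)]; exact hLzero k hkΛ
      have hLk1 : Lf Λ lam (k + 1) = ∑ t ∈ Finset.Ioc (k + 1) m, Af lam0 u t :=
        key' (k + 1) (by omega) (by omega)
      have hsplitk : Af lam0 u (k + 1) + ∑ t ∈ Finset.Ioc (k + 1) m, Af lam0 u t
          = ∑ t ∈ Finset.Ioc k m, Af lam0 u t := by
        rw [show Finset.Ioc k m = insert (k + 1) (Finset.Ioc (k + 1) m) from by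
          ext x; simp only [Finset.mem_Ioc, Finset.mem_insert]; omega,
          Finset.sum_insert (by simp)]
      have h3 : Af lam0 u (k + 1) ≤ 0 := by
        have := hLnn (k + 1)
        rw [hLk1] at this
        linarith
      have hcons : (∑ t ∈ Finset.Ioc 1 k, Af lam0 u t)
          + ∑ t ∈ Finset.Ioc k m, Af lam0 u t
          = ∑ t ∈ Finset.Ioc 1 m, Af lam0 u t :=
        Finset.sum_Ioc_consecutive _ (by omega) (by omega)
      have h1 : 0 ≤ ∑ t ∈ Finset.Ioc 1 k, Af lam0 u t := by
        have := hLnn 1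
        rw [hL1] at this
        linarith
      have hz := zero_on_interval (Af lam0 u) 1 k m (by omega) hkm
        (fun p q hp hpq hq => hmono p q (by omega) hpq hq) h1 hLk h3
      intro a b ha2 ham hb2 hbm
      have hA : ∀ t, 2 ≤ t → t ≤ m → lam0 * u t = -1 := by
        intro t h2 h3
        have h := hz t (by omega) h3
        unfold Af at h
        linarith
      have hlam0ne : lam0 ≠ 0 := by
        intro h
        have := hA a ha2 ham
        rw [h] at this
        norm_num at this
      exact mul_left_cancel₀ hlam0ne (by rw [hA a ha2 ham, hA b hb2 hbm])
  · -- case 0 ∉ Λ : (iii) or (ii)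
    by_cases hall : ∀ i : ℕ, 1 ≤ i → i ≤ m - 1 → i ∈ Λ
    · exact Or.inr (Or.inr (Or.inl hall))
    · push_neg at hall
      obtain ⟨k, hk1, hk2, hkΛ⟩ := hall
      right; left
      have hkm : k < m := by omega
      have hA1 : Af lam0 u 1 = -(Lf Λ lam 0) - Lf Λ lam 1 := by
        unfold Af
        linarith
      have hL0 : Lf Λ lam 0 = 0 := hLzero 0 h0Λ
      have htot : ∑ t ∈ Finset.Ioc 0 m, Af lam0 u t = 0 := by
        rw [show Finset.Ioc 0 m = insert 1 (Finset.Ioc 1 m) from by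
          ext x; simp only [Finset.mem_Ioc, Finset.mem_insert]; omega,
          Finset.sum_insert (by simp), ← hL1, hA1, hL0]
        ring
      have hLk : (∑ t ∈ Finset.Ioc k m, Af lam0 u t) = 0 := by
        rw [← key' k (by omega) (by omega)]; exact hLzero k hkΛ
      have hLk1 : Lf Λ lam (k + 1) = ∑ t ∈ Finset.Ioc (k + 1) m, Af lam0 u t :=
        key' (k + 1) (by omega) (by omega)
      have hsplitk : Af lam0 u (k + 1) + ∑ t ∈ Finset.Ioc (k + 1) m, Af lam0 u t
          = ∑ t ∈ Finset.Ioc k m, Af lam0 u t := by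
        rw [show Finset.Ioc k m = insert (k + 1) (Finset.Ioc (k + 1) m) from by
          ext x; simp only [Finset.mem_Ioc, Finset.mem_insert]; omega,
          Finset.sum_insert (by simp)]
      have h3 : Af lam0 u (k + 1) ≤ 0 := by
        have := hLnn (k + 1)
        rw [hLk1] at this
        linarith
      have hcons : (∑ t ∈ Finset.Ioc 0 k, Af lam0 u t)
          + ∑ t ∈ Finset.Ioc k m, Af lam0 u t
          = ∑ t ∈ Finset.Ioc 0 m, Af lam0 u t :=
        Finset.sum_Ioc_consecutive _ (by omega) (by omega)
      have h1 : 0 ≤ ∑ t ∈ Finset.Ioc 0 k, Af lam0 u t := by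
        linarith
      have hz := zero_on_interval (Af lam0 u) 0 k m (by omega) hkm
        (fun p q hp hpq hq => hmono p q (by omega) hpq hq) h1 hLk h3
      intro a b ha1 ham hb1 hbm
      have hA : ∀ t, 1 ≤ t → t ≤ m → lam0 * u t = -1 := by
        intro t h2 h3
        have h := hz t (by omega) h3
        unfold Af at h
        linarith
      have hlam0ne : lam0 ≠ 0 := by
        intro h
        have := hA a ha1 ham
        rw [h] at this
        norm_num at this
      exact mul_left_cancel₀ hlam0ne (by rw [hA a ha1 ham, hA b hb1 hbm])
end

section
/- Let c and N be positive integers with N ≥ 2c + 1, and let A_1 ≥ A_2 ≥ … ≥ A_N ≥ 1 and D_1 ≥ D_2 ≥ … ≥ D_c be real numbers satisfying A_1⋯A_N ≤ D_1⋯D_c, D_1 ≥ 2A_1, and D_j ≥ A_j for 2 ≤ j ≤ c. If A_1 + … + A_N > D_1 + … + D_c, then A_1 < N; consequently A_i ≤ N − 1 for all i whenever the A_i are integers. -/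
private lemma interp_le (a x : ℝ) (ha : 1 < a) (h1 : 1 ≤ x) (h2 : x ≤ a) :
    Real.exp ((x - 1) * (Real.log a / (a - 1))) ≤ x := by
  have ha0 : (0:ℝ) < a := by linarith
  have hx0 : (0:ℝ) < x := by linarith
  have ha1 : (0:ℝ) < a - 1 := by linarith
  set t : ℝ := (x - 1) / (a - 1) with ht
  have ht0 : (0:ℝ) ≤ t := div_nonneg (by linarith) (by linarith)
  have htm : t * (a - 1) = x - 1 := div_mul_cancel₀ _ (by linarith)
  have ht1 : t ≤ 1 := by rw [ht, div_le_one ha1]; linarith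
  have hcomb : (1 - t) • (1:ℝ) + t • a = x := by
    simp only [smul_eq_mul]
    linear_combination htm
  have hlog := (strictConcaveOn_log_Ioi.concaveOn).2 (Set.mem_Ioi.mpr one_pos)
      (Set.mem_Ioi.mpr ha0) (by linarith : (0:ℝ) ≤ 1 - t) ht0 (by ring)
  rw [hcomb] at hlog
  simp only [smul_eq_mul, Real.log_one, mul_zero, zero_add] at hlog
  have heq : (x - 1) * (Real.log a / (a - 1)) = t * Real.log a := by rw [ht]; ring
  rw [heq]
  calc Real.exp (t * Real.log a) ≤ Real.exp (Real.log x) := Real.exp_le_exp.mpr hlog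
    _ = x := Real.exp_log hx0

private lemma core_ineq (c u a : ℝ) (hc : 1 ≤ c) (hu : c < u) (ha : 1 < a) (hau : a ≤ u + 1) :
    Real.log 2 + (u - c) / a < u * (Real.log a / (a - 1)) := by
  have ha0 : (0:ℝ) < a := by linarith
  have ha1 : (0:ℝ) < a - 1 := by linarith
  have hG : 0 < a * Real.log a - a + 1 := by
    have hne : a⁻¹ ≠ 1 := by
      intro h; rw [inv_eq_one] at h; linarith
    have h := Real.log_lt_sub_one_of_pos (show (0:ℝ) < a⁻¹ by positivity) hne
    rw [Real.log_inv] at h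
    have h2 := mul_lt_mul_of_pos_left h ha0
    have hinv : a * a⁻¹ = 1 := mul_inv_cancel₀ (ne_of_gt ha0)
    nlinarith
  have key : (a - 1) * (a * Real.log 2 + (u - c)) < u * (a * Real.log a) := by
    rcases eq_or_ne a 2 with h2 | h2
    · subst h2
      have hl2 : (0.6931471803:ℝ) < Real.log 2 := Real.log_two_gt_d9
      nlinarith [mul_pos (show (0:ℝ) < u - 1 by linarith)
        (show (0:ℝ) < 2 * Real.log 2 - 1 by nlinarith)]
    · have hg : 0 < a * Real.log a - a * Real.log 2 - a + 2 := by
        have hne : (2:ℝ) / a ≠ 1 := by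
          intro h
          apply h2
          field_simp at h
          linarith
        have h := Real.log_lt_sub_one_of_pos (show (0:ℝ) < 2 / a by positivity) hne
        rw [Real.log_div (by norm_num) (ne_of_gt ha0)] at h
        have h3 := mul_lt_mul_of_pos_left h ha0
        have hinv : a * (2 / a) = 2 := by field_simp
        nlinarith
      have hua : a - 1 ≤ u := by linarith
      nlinarith [mul_nonneg (show (0:ℝ) ≤ u - (a-1) by linarith) hG.le,
        mul_pos ha1 hg, mul_nonneg ha1.le (show (0:ℝ) ≤ c - 1 by linarith)]
  have expand : u * (Real.log a / (a - 1)) - (Real.log 2 + (u - c) / a)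
      = (u * (a * Real.log a) - (a - 1) * (a * Real.log 2 + (u - c))) / (a * (a - 1)) := by
    field_simp
  have hpos : 0 < u * (Real.log a / (a - 1)) - (Real.log 2 + (u - c) / a) := by
    rw [expand]
    exact div_pos (by linarith) (by positivity)
  linarith

/-- Let `c, N` be positive integers with `N ≥ 2c + 1`, and
let `A_1 ≥ … ≥ A_N ≥ 1` and `D_1 ≥ … ≥ D_c` be real numbers (encoded as
`A D : ℕ → ℝ` with relevant coordinates `A 1, …, A N` and `D 1, …, D c`)
satisfying `A_1⋯A_N ≤ D_1⋯D_c`, `D_1 ≥ 2A_1`, and `D_j ≥ A_j` for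
`2 ≤ j ≤ c`.  If `A_1 + … + A_N > D_1 + … + D_c`, then `A_1 < N`;
consequently, if all the `A_i` are integers, then `A_i ≤ N - 1` for all
`1 ≤ i ≤ N`. -/
theorem stmt_9 (c N : ℕ) (hc : 0 < c) (hN : 2 * c + 1 ≤ N)
    (A D : ℕ → ℝ)
    (hA_mono : ∀ i j : ℕ, 1 ≤ i → i ≤ j → j ≤ N → A j ≤ A i)
    (hA_last : 1 ≤ A N)
    (hD_mono : ∀ i j : ℕ, 1 ≤ i → i ≤ j → j ≤ c → D j ≤ D i)
    (hprod : ∏ i ∈ Finset.Icc 1 N, A i ≤ ∏ j ∈ Finset.Icc 1 c, D j)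
    (hD1 : 2 * A 1 ≤ D 1)
    (hDA : ∀ j : ℕ, 2 ≤ j → j ≤ c → A j ≤ D j)
    (hsum : ∑ j ∈ Finset.Icc 1 c, D j < ∑ i ∈ Finset.Icc 1 N, A i) :
    A 1 < N ∧
      ((∀ i : ℕ, 1 ≤ i → i ≤ N → ∃ z : ℤ, A i = (z : ℝ)) →
        ∀ i : ℕ, 1 ≤ i → i ≤ N → A i ≤ (N : ℝ) - 1) := by
  have hcN : c ≤ N := by omega
  have hc1N : c + 1 ≤ N := by omega
  have hIoc : ∀ m : ℕ, Finset.Icc 1 m = Finset.Ioc 0 m := fun m => by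
    ext x; simp only [Finset.mem_Icc, Finset.mem_Ioc]; omega
  rw [hIoc, hIoc] at hprod hsum
  have hA_pos : ∀ i : ℕ, 1 ≤ i → i ≤ N → 1 ≤ A i := fun i h1 h2 =>
    le_trans hA_last (hA_mono i N h1 h2 le_rfl)
  have key : A 1 < N := by
    by_contra hcon
    push_neg at hcon
    set S := Finset.Ioc 0 c with hS
    set T := Finset.Ioc c N with hT
    set a := A (c + 1) with ha_def
    set s := ∑ i ∈ T, A i with hs_def
    set P := ∏ i ∈ T, A i with hP_def
    have h1S : (1:ℕ) ∈ S := by rw [hS, Finset.mem_Ioc]; omega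
    have hcT : (c+1) ∈ T := by rw [hT, Finset.mem_Ioc]; omega
    have hmemS : ∀ j ∈ S, 1 ≤ j ∧ j ≤ c := by
      intro j hj; rw [hS, Finset.mem_Ioc] at hj; omega
    have hmemT : ∀ i ∈ T, c + 1 ≤ i ∧ i ≤ N := by
      intro i hi; rw [hT, Finset.mem_Ioc] at hi; omega
    have hsplitA : (∑ j ∈ S, A j) + s = ∑ i ∈ Finset.Ioc 0 N, A i :=
      Finset.sum_Ioc_consecutive (fun i => A i) (Nat.zero_le c) hcN
    have hsplitAp : (∏ j ∈ S, A j) * P = ∏ i ∈ Finset.Ioc 0 N, A i :=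
      Finset.prod_Ioc_consecutive (fun i => A i) (Nat.zero_le c) hcN
    -- (1) tail sum exceeds A 1
    have hD_ge : A 1 + ∑ j ∈ S, A j ≤ ∑ j ∈ S, D j := by
      have hDs : ∀ j ∈ S.erase 1, A j ≤ D j := by
        intro j hj
        obtain ⟨h1, h2⟩ := hmemS j (Finset.mem_of_mem_erase hj)
        have hne := Finset.ne_of_mem_erase hj
        exact hDA j (by omega) h2
      have e1 := Finset.add_sum_erase S A h1S
      have e2 := Finset.add_sum_erase S D h1S
      have e3 := Finset.sum_le_sum hDs
      linarith
    have hsA1 : A 1 < s := by linarith [hsum, hD_ge, hsplitA]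
    -- tail term bounds
    have hT1 : ∀ i ∈ T, 1 ≤ A i := by
      intro i hi
      obtain ⟨h1, h2⟩ := hmemT i hi
      exact hA_pos i (by omega) h2
    have hTa : ∀ i ∈ T, A i ≤ a := by
      intro i hi
      obtain ⟨h1, h2⟩ := hmemT i hi
      exact hA_mono (c+1) i (by omega) h1 h2
    have hcard : T.card = N - c := Nat.card_Ioc c N
    have hcardR : (T.card : ℝ) + c = N := by
      rw [hcard]
      push_cast [Nat.cast_sub hcN]
      ring
    have hsn : s ≤ (T.card : ℝ) * a := by
      calc s ≤ T.card • a := Finset.sum_le_card_nsmul T A a hTa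
        _ = (T.card : ℝ) * a := nsmul_eq_mul _ _
    have hcR : (1:ℝ) ≤ (c:ℝ) := by exact_mod_cast hc
    have ha1 : 1 < a := by
      by_contra hle
      push_neg at hle
      have h1 : (T.card:ℝ) * a ≤ (T.card:ℝ) * 1 :=
        mul_le_mul_of_nonneg_left hle (by positivity)
      linarith
    have ha0 : (0:ℝ) < a := by linarith
    -- a + (card - 1) ≤ s
    have hs_ge : a + ((T.card:ℝ) - 1) ≤ s := by
      have e1 := Finset.add_sum_erase T A hcT
      have hrest : ((T.erase (c+1)).card : ℝ) * 1 ≤ ∑ i ∈ T.erase (c+1), A i := by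
        have := Finset.card_nsmul_le_sum (T.erase (c+1)) A 1
          (fun i hi => hT1 i (Finset.mem_of_mem_erase hi))
        simpa [nsmul_eq_mul] using this
      have hce : (T.erase (c+1)).card = T.card - 1 := Finset.card_erase_of_mem hcT
      have hc1 : 1 ≤ T.card := Finset.card_pos.mpr ⟨c+1, hcT⟩
      have hceR : ((T.erase (c+1)).card : ℝ) = (T.card : ℝ) - 1 := by
        rw [hce]; push_cast [Nat.cast_sub hc1]; ring
      rw [hceR] at hrest
      linarith
    -- lower bound on P
    have hPlow : Real.exp ((s - T.card) * (Real.log a / (a - 1))) ≤ P := by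
      have hsum_t : ∑ i ∈ T, ((A i - 1) * (Real.log a / (a - 1)))
          = (s - T.card) * (Real.log a / (a - 1)) := by
        rw [← Finset.sum_mul, Finset.sum_sub_distrib, Finset.sum_const, nsmul_eq_mul, mul_one]
      calc Real.exp ((s - T.card) * (Real.log a / (a - 1)))
          = ∏ i ∈ T, Real.exp ((A i - 1) * (Real.log a / (a - 1))) := by
            rw [← Real.exp_sum, hsum_t]
        _ ≤ ∏ i ∈ T, A i := Finset.prod_le_prod (fun i _ => (Real.exp_pos _).le)
            (fun i hi => interp_le a (A i) ha1 (hT1 i hi) (hTa i hi))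
    -- upper bound on P
    set B : ℕ → ℝ := fun j => if j = 1 then 2 * A 1 else A j with hB
    have hBfacts : ∀ j ∈ S, a ≤ B j ∧ B j ≤ D j := by
      intro j hj
      obtain ⟨h1, h2⟩ := hmemS j hj
      by_cases hj1 : j = 1
      · subst hj1
        simp only [hB, if_pos rfl]
        constructor
        · have h3 := hA_mono 1 (c+1) le_rfl (by omega) hc1N
          have h4 := hA_pos 1 le_rfl (by omega)
          rw [← ha_def] at h3
          linarith
        · exact hD1
      · simp only [hB, if_neg hj1]
        exact ⟨hA_mono j (c+1) h1 (by omega) hc1N, hDA j (by omega) h2⟩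
    have hBpos : ∀ j ∈ S, 0 < B j := fun j hj => lt_of_lt_of_le ha0 (hBfacts j hj).1
    have hsumB : ∑ j ∈ S, B j = A 1 + ∑ j ∈ S, A j := by
      have e1 := Finset.add_sum_erase S B h1S
      have e2 := Finset.add_sum_erase S A h1S
      have e3 : ∑ j ∈ S.erase 1, B j = ∑ j ∈ S.erase 1, A j :=
        Finset.sum_congr rfl (fun j hj => by
          simp only [hB, if_neg (Finset.ne_of_mem_erase hj)])
      have eB1 : B 1 = 2 * A 1 := by simp [hB]
      rw [← e1, ← e2, e3, eB1]; ring
    have hprodB : ∏ j ∈ S, B j = 2 * ∏ j ∈ S, A j := by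
      have e1 := Finset.mul_prod_erase S B h1S
      have e2 := Finset.mul_prod_erase S A h1S
      have e3 : ∏ j ∈ S.erase 1, B j = ∏ j ∈ S.erase 1, A j :=
        Finset.prod_congr rfl (fun j hj => by
          simp only [hB, if_neg (Finset.ne_of_mem_erase hj)])
      have eB1 : B 1 = 2 * A 1 := by simp [hB]
      rw [← e1, ← e2, e3, eB1]; ring
    have hprodS_pos : 0 < ∏ j ∈ S, A j :=
      Finset.prod_pos (fun j hj => by
        obtain ⟨h1, h2⟩ := hmemS j hj
        linarith [hA_pos j h1 (by omega)])
    have hBD : ∏ j ∈ S, D j ≤ (∏ j ∈ S, B j) * Real.exp ((s - A 1) / a) := by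
      have step1 : ∏ j ∈ S, D j ≤ ∏ j ∈ S, (B j * Real.exp (D j / B j - 1)) := by
        refine Finset.prod_le_prod (fun j hj => le_trans (hBpos j hj).le (hBfacts j hj).2)
          (fun j hj => ?_)
        have hBj := hBpos j hj
        have h := Real.add_one_le_exp (D j / B j - 1)
        have h2 : D j / B j ≤ Real.exp (D j / B j - 1) := by linarith
        calc D j = B j * (D j / B j) := by field_simp
          _ ≤ B j * Real.exp (D j / B j - 1) := mul_le_mul_of_nonneg_left h2 hBj.le
      have step2 : ∏ j ∈ S, (B j * Real.exp (D j / B j - 1))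
          = (∏ j ∈ S, B j) * Real.exp (∑ j ∈ S, (D j / B j - 1)) := by
        rw [Finset.prod_mul_distrib, Real.exp_sum]
      have step3 : ∑ j ∈ S, (D j / B j - 1) ≤ (s - A 1) / a := by
        have e1 : ∀ j ∈ S, D j / B j - 1 ≤ (D j - B j) / a := by
          intro j hj
          have hBj := hBpos j hj
          have hDB := (hBfacts j hj).2
          have haB := (hBfacts j hj).1
          have lhs_eq : D j / B j - 1 = (D j - B j) / B j := by field_simp
          rw [lhs_eq]
          gcongr
        have e2 : (∑ j ∈ S, D j - ∑ j ∈ S, B j) / a ≤ (s - A 1) / a :=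
          (div_le_div_iff_of_pos_right ha0).mpr (by linarith [hsum, hsumB, hsplitA])
        calc ∑ j ∈ S, (D j / B j - 1) ≤ ∑ j ∈ S, (D j - B j) / a :=
              Finset.sum_le_sum e1
          _ = (∑ j ∈ S, D j - ∑ j ∈ S, B j) / a := by
              rw [← Finset.sum_div, Finset.sum_sub_distrib]
          _ ≤ (s - A 1) / a := e2
      calc ∏ j ∈ S, D j ≤ ∏ j ∈ S, (B j * Real.exp (D j / B j - 1)) := step1
        _ = (∏ j ∈ S, B j) * Real.exp (∑ j ∈ S, (D j / B j - 1)) := step2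
        _ ≤ (∏ j ∈ S, B j) * Real.exp ((s - A 1) / a) := by
            have hBprod_pos : 0 ≤ ∏ j ∈ S, B j :=
              (Finset.prod_pos hBpos).le
            exact mul_le_mul_of_nonneg_left (Real.exp_le_exp.mpr step3) hBprod_pos
    have hPup : P ≤ 2 * Real.exp ((s - A 1) / a) := by
      have hchain : (∏ j ∈ S, A j) * P ≤ (∏ j ∈ S, A j) * (2 * Real.exp ((s - A 1) / a)) := by
        have h1 : (∏ j ∈ S, A j) * P ≤ ∏ j ∈ S, D j := by
          rw [hsplitAp]; exact hprod
        have h2 := hBD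
        rw [hprodB] at h2
        nlinarith [h1, h2]
      exact le_of_mul_le_mul_left hchain hprodS_pos
    -- combine
    have hfinal : (s - T.card) * (Real.log a / (a - 1)) ≤ Real.log 2 + (s - T.card - c) / a := by
      have h1 : Real.exp ((s - T.card) * (Real.log a / (a - 1)))
          ≤ 2 * Real.exp ((s - T.card - c) / a) := by
        refine le_trans (hPlow.trans hPup) ?_
        have : (s - A 1) / a ≤ (s - T.card - c) / a :=
          (div_le_div_iff_of_pos_right ha0).mpr (by linarith [hcon, hcardR])
        nlinarith [Real.exp_le_exp.mpr this, Real.exp_pos ((s - A 1)/a)]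
      have h2 := Real.log_le_log (Real.exp_pos _) h1
      rw [Real.log_exp, Real.log_mul (by norm_num) (Real.exp_ne_zero _), Real.log_exp] at h2
      exact h2
    have hcontra := core_ineq c (s - T.card) a hcR (by linarith [hsA1, hcon, hcardR]) ha1
      (by linarith [hs_ge])
    linarith
  refine ⟨key, fun hint i h1 h2 => ?_⟩
  obtain ⟨z, hz⟩ := hint i h1 h2
  have hAi : A i ≤ A 1 := hA_mono 1 i le_rfl h1 h2
  have hzN : (z:ℝ) < (N:ℝ) := by rw [← hz]; linarith
  have hzN' : z < (N:ℤ) := by exact_mod_cast hzN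
  have hzN2 : z ≤ (N:ℤ) - 1 := by omega
  rw [hz]
  exact_mod_cast hzN2
end

section
/- Let n ≥ 2 and c ≥ 1 be integers with n + 1 ≥ 2c + 1, and let a_0 ≤ a_1 ≤ … ≤ a_n and d_1 ≤ d_2 ≤ … ≤ d_c be positive integers satisfying: d_c ≥ 2a_n; d_{c−k} > a_{n−k} for all 1 ≤ k ≤ c−1; a_0⋯a_n ≤ d_1⋯d_c; and a_0 + a_1 + … + a_n > d_1 + … + d_c. Then a_i ≤ n for every 0 ≤ i ≤ n, and d_j ≤ n(n+1) for every 1 ≤ j ≤ c. -/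
/-!
Suppose `a n > n`. Set `m = n - c`, `t = a m`, let `P = a 0 ⋯ a m` and `E = ∑ i ≤ m, (a i - 1)`,
and pair each of `a (m + 1), …, a (n - 1)` with a degree exceeding it and `2 * a n` with the
top degree; let `w` be the total excess of the degrees over their partners. The sum inequality
then gives `E ≥ w + 2` (this is where `a n > n` enters), and `E ≥ t - 1`. Each pair `x ≤ y` with
`t ≤ x` satisfies `y t ^ (y - x) ≤ x (t + 1) ^ (y - x)`, so the product inequality gives
`P ≤ 2 (1 + 1/t) ^ w`, while `t ^ (u - 1) ≤ u ^ (t - 1)` for `u ≤ t` gives `t ^ E ≤ P ^ (t - 1)`.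
These bounds are incompatible: for `t ≥ 4` because `(1 + 1/t) ^ (2t - 2) ≤ t` (from
`(1 + 1/t) ^ t ≤ e`), and for `t = 2, 3` by direct comparison. The bound on the degrees follows
from `d j ≤ ∑ d < ∑ a ≤ n (n + 1)`.
-/
open Finset

namespace Nat

theorem mul_pow_sub_le_mul_succ_pow_sub {t x y : ℕ} (htx : t ≤ x) (hxy : x ≤ y) :
    y * t ^ (y - x) ≤ x * (t + 1) ^ (y - x) := by
  obtain ⟨e, rfl⟩ := Nat.exists_eq_add_of_le hxy
  clear hxy
  rw [Nat.add_sub_cancel_left]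
  induction e with
  | zero => simp
  | succ e ih =>
    calc (x + (e + 1)) * t ^ (e + 1) = (x + (e + 1)) * t * t ^ e := by ring
      _ ≤ (x + e) * (t + 1) * t ^ e := Nat.mul_le_mul_right _ (by nlinarith)
      _ = (t + 1) * ((x + e) * t ^ e) := by ring
      _ ≤ (t + 1) * (x * (t + 1) ^ e) := Nat.mul_le_mul_left _ ih
      _ = x * (t + 1) ^ (e + 1) := by ring

theorem succ_pow_le_succ_mul_pow {e t : ℕ} (h : e + 1 ≤ t) : (t + 1) ^ e ≤ (e + 1) * t ^ e := by
  induction e with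
  | zero => simp
  | succ e ih =>
    calc (t + 1) ^ (e + 1) = (t + 1) ^ e * (t + 1) := pow_succ _ _
      _ ≤ (e + 1) * t ^ e * (t + 1) := by gcongr; exact ih (by omega)
      _ = (e + 1) * (t + 1) * t ^ e := by ring
      _ ≤ (e + 2) * t * t ^ e := Nat.mul_le_mul_right _ (by nlinarith)
      _ = (e + 1 + 1) * t ^ (e + 1) := by ring

theorem pow_pred_le_pow_pred {u t : ℕ} (hu : 1 ≤ u) (hut : u ≤ t) :
    t ^ (u - 1) ≤ u ^ (t - 1) := by
  induction t, hut using Nat.le_induction with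
  | base => rfl
  | succ t hut ih =>
    calc (t + 1) ^ (u - 1) ≤ (u - 1 + 1) * t ^ (u - 1) := succ_pow_le_succ_mul_pow (by omega)
      _ = u * t ^ (u - 1) := by rw [Nat.sub_add_cancel hu]
      _ ≤ u * u ^ (t - 1) := by gcongr
      _ = u ^ (t + 1 - 1) := by rw [← pow_succ', Nat.sub_add_comm (by omega)]

theorem succ_pow_le_three_mul_pow {k t : ℕ} (hk : k ≤ t) : (t + 1) ^ k ≤ 3 * t ^ k := by
  rcases Nat.eq_zero_or_pos t with rfl | ht
  · simp_all
  have ht' : (0 : ℝ) < t := by exact_mod_cast ht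
  suffices ((t : ℝ) + 1) ^ k ≤ 3 * (t : ℝ) ^ k by exact_mod_cast this
  calc ((t : ℝ) + 1) ^ k = (t : ℝ) ^ k * (1 + (t : ℝ)⁻¹) ^ k := by
        rw [← mul_pow, mul_add, mul_inv_cancel₀ ht'.ne', mul_one]
    _ ≤ (t : ℝ) ^ k * (1 + (t : ℝ)⁻¹) ^ t := by
        gcongr
        exact le_add_of_nonneg_right (by positivity)
    _ ≤ (t : ℝ) ^ k * 3 := by
        gcongr
        exact Real.one_add_inv_pow_le_exp.trans Real.exp_one_lt_three.le
    _ = 3 * (t : ℝ) ^ k := mul_comm _ _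

theorem succ_pow_two_mul_sub_two_le {t : ℕ} (ht : 4 ≤ t) :
    (t + 1) ^ (2 * t - 2) ≤ t ^ (2 * t - 1) := by
  rcases Nat.lt_or_ge t 9 with ht9 | ht9
  · interval_cases t <;> norm_num
  calc (t + 1) ^ (2 * t - 2) = ((t + 1) ^ (t - 1)) ^ 2 := by rw [← pow_mul]; congr 1; omega
    _ ≤ (3 * t ^ (t - 1)) ^ 2 := by gcongr; exact succ_pow_le_three_mul_pow (by omega)
    _ = 9 * t ^ (2 * t - 2) := by rw [mul_pow, ← pow_mul]; congr 2; omega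
    _ ≤ t * t ^ (2 * t - 2) := by gcongr
    _ = t ^ (2 * t - 1) := by rw [← pow_succ']; congr 1; omega

theorem two_pow_mul_succ_pow_lt_pow {t E w : ℕ} (ht : 2 ≤ t) (htE : t ≤ E + 1)
    (hwE : w + 2 ≤ E) :
    2 ^ (t - 1) * (t + 1) ^ (w * (t - 1)) < t ^ (E + w * (t - 1)) := by
  obtain rfl | rfl | ht4 : t = 2 ∨ t = 3 ∨ 4 ≤ t := by omega
  · calc 2 ^ (2 - 1) * (2 + 1) ^ (w * (2 - 1)) = 2 * 3 ^ w := by simp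
      _ < 4 * 4 ^ w :=
          Nat.mul_lt_mul_of_lt_of_le (by norm_num) (Nat.pow_le_pow_left (by norm_num) w)
            (by positivity)
      _ = 2 ^ (2 * w + 2) := by rw [pow_add, pow_mul]; ring
      _ ≤ 2 ^ (E + w * (2 - 1)) := Nat.pow_le_pow_right (by norm_num) (by omega)
  · calc 2 ^ (3 - 1) * (3 + 1) ^ (w * (3 - 1)) = 4 * 16 ^ w := by
          rw [mul_comm w, pow_mul]; norm_num
      _ < 9 * 27 ^ w :=
          Nat.mul_lt_mul_of_lt_of_le (by norm_num) (Nat.pow_le_pow_left (by norm_num) w)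
            (by positivity)
      _ = 3 ^ (3 * w + 2) := by rw [pow_add, pow_mul]; ring
      _ ≤ 3 ^ (E + w * (3 - 1)) := Nat.pow_le_pow_right (by norm_num) (by omega)
  · -- after squaring, `4 ^ (t - 1) ≤ t ^ (t - 1)` absorbs the factor `2 ^ (t - 1)`
    have key := succ_pow_two_mul_sub_two_le ht4
    obtain ⟨s, rfl⟩ := Nat.exists_eq_add_of_le' (show 1 ≤ t by omega)
    rw [show 2 * (s + 1) - 2 = 2 * s by omega, show 2 * (s + 1) - 1 = 2 * s + 1 by omega] at key
    simp only [Nat.add_sub_cancel]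
    refine lt_of_pow_lt_pow_left₀ 2 (Nat.zero_le _) ?_
    calc (2 ^ s * (s + 1 + 1) ^ (w * s)) ^ 2 = 4 ^ s * ((s + 1 + 1) ^ (2 * s)) ^ w := by
          rw [mul_pow, ← pow_mul, mul_comm s 2, pow_mul]; ring
      _ ≤ (s + 1) ^ s * ((s + 1) ^ (2 * s + 1)) ^ w := by gcongr
      _ = (s + 1) ^ (s + (2 * s + 1) * w) := by rw [← pow_mul, ← pow_add]
      _ < (s + 1) ^ ((E + w * s) * 2) := Nat.pow_lt_pow_right (by omega) (by nlinarith)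
      _ = ((s + 1) ^ (E + w * s)) ^ 2 := pow_mul _ _ _

theorem two_mul_succ_pow_lt_mul_pow {t E w P : ℕ} (ht : 2 ≤ t) (htE : t ≤ E + 1)
    (hwE : w + 2 ≤ E) (hP : t ^ E ≤ P ^ (t - 1)) : 2 * (t + 1) ^ w < P * t ^ w := by
  by_contra! h
  refine (two_pow_mul_succ_pow_lt_pow ht htE hwE).not_ge ?_
  calc t ^ (E + w * (t - 1)) = t ^ E * (t ^ w) ^ (t - 1) := by rw [pow_add, pow_mul]
    _ ≤ (P * t ^ w) ^ (t - 1) := by rw [mul_pow]; gcongr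
    _ ≤ (2 * (t + 1) ^ w) ^ (t - 1) := by gcongr
    _ = 2 ^ (t - 1) * (t + 1) ^ (w * (t - 1)) := by rw [mul_pow, pow_mul]

end Nat

namespace Finset

@[to_additive]
theorem prod_range_succ_add_succ {M : Type*} [CommMonoid M] (f : ℕ → M) (m c : ℕ) :
    ∏ i ∈ range (m + c + 1 + 1), f i =
      (∏ i ∈ range (m + 1), f i) * (∏ k ∈ range c, f (m + 1 + k)) * f (m + c + 1) := by
  rw [show m + c + 1 + 1 = m + 1 + (c + 1) by ring, prod_range_add,
    prod_range_succ (fun k ↦ f (m + 1 + k)), ← mul_assoc, show m + 1 + c = m + c + 1 by ring]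

@[to_additive]
theorem prod_Icc_succ_eq_prod_range_mul {M : Type*} [CommMonoid M] (f : ℕ → M) (c : ℕ) :
    ∏ j ∈ Icc 1 (c + 1), f j = (∏ k ∈ range c, f (k + 1)) * f (c + 1) := by
  rw [prod_Icc_succ_top (by omega), ← Ico_add_one_right_eq_Icc, prod_Ico_eq_prod_range]
  simp only [add_tsub_cancel_right, add_comm 1]

theorem pow_sum_pred_le_prod_pow {ι : Type*} {s : Finset ι} {a : ι → ℕ} {t : ℕ}
    (ha : ∀ i ∈ s, 1 ≤ a i ∧ a i ≤ t) : t ^ (∑ i ∈ s, (a i - 1)) ≤ (∏ i ∈ s, a i) ^ (t - 1) := by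
  rw [← prod_pow_eq_pow_sum, ← prod_pow]
  exact prod_le_prod' fun i hi ↦ Nat.pow_pred_le_pow_pred (ha i hi).1 (ha i hi).2

theorem prod_mul_pow_le_prod_mul_succ_pow {ι : Type*} {s : Finset ι} {x y : ι → ℕ} {t : ℕ}
    (hxy : ∀ i ∈ s, t ≤ x i ∧ x i ≤ y i) :
    (∏ i ∈ s, y i) * t ^ (∑ i ∈ s, (y i - x i)) ≤
      (∏ i ∈ s, x i) * (t + 1) ^ (∑ i ∈ s, (y i - x i)) := by
  simp only [← prod_pow_eq_pow_sum, ← prod_mul_distrib]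
  exact prod_le_prod' fun i hi ↦ Nat.mul_pow_sub_le_mul_succ_pow_sub (hxy i hi).1 (hxy i hi).2

theorem two_mul_succ_pow_lt_prod_mul_pow {ι : Type*} {s : Finset ι} {a : ι → ℕ} {t w : ℕ}
    (ha : ∀ i ∈ s, 1 ≤ a i ∧ a i ≤ t) (hmax : ∃ i ∈ s, a i = t)
    (hw : w + 2 ≤ ∑ i ∈ s, (a i - 1)) : 2 * (t + 1) ^ w < (∏ i ∈ s, a i) * t ^ w := by
  have htE : t ≤ ∑ i ∈ s, (a i - 1) + 1 := by
    obtain ⟨i, hi, rfl⟩ := hmax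
    have := single_le_sum (f := fun i ↦ a i - 1) (fun _ _ ↦ Nat.zero_le _) hi
    omega
  have ht : 2 ≤ t := by
    by_contra! ht
    have : ∑ i ∈ s, (a i - 1) = 0 := sum_eq_zero fun i hi ↦ by have := ha i hi; omega
    omega
  exact Nat.two_mul_succ_pow_lt_mul_pow ht htE hw (pow_sum_pred_le_prod_pow ha)

end Finset

/-- Written with `n = m + c + 1` and `c + 1` degrees, the conditions `a (n - k) < d (c + 1 - k)`
pair `a (m + 1 + k)` with `d (k + 1)`, and `d (c + 1) ≥ 2 * a n` pairs `2 * a n` with the top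
degree; this is the total excess of the degrees over their partners. -/
def pairingSlack (m c : ℕ) (a d : ℕ → ℕ) : ℕ :=
  ∑ k ∈ range c, (d (k + 1) - a (m + 1 + k)) + (d (c + 1) - 2 * a (m + c + 1))

section Pairing

variable {m c : ℕ} {a d : ℕ → ℕ}

theorem sum_Icc_eq_add_pairingSlack (hpair : ∀ k < c, a (m + 1 + k) ≤ d (k + 1))
    (hdc : 2 * a (m + c + 1) ≤ d (c + 1)) :
    ∑ j ∈ Icc 1 (c + 1), d j =
      ∑ k ∈ range c, a (m + 1 + k) + 2 * a (m + c + 1) + pairingSlack m c a d := by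
  have hmid : ∑ k ∈ range c, d (k + 1) =
      ∑ k ∈ range c, a (m + 1 + k) + ∑ k ∈ range c, (d (k + 1) - a (m + 1 + k)) := by
    rw [← sum_add_distrib]
    exact sum_congr rfl fun k hk ↦ by have := hpair k (mem_range.mp hk); omega
  rw [sum_Icc_succ_eq_sum_range_add, hmid, pairingSlack]
  omega

theorem prod_Icc_mul_pow_pairingSlack_le {t : ℕ} (hpair : ∀ k < c, a (m + 1 + k) ≤ d (k + 1))
    (hdc : 2 * a (m + c + 1) ≤ d (c + 1)) (hta : ∀ k < c, t ≤ a (m + 1 + k))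
    (htc : t ≤ 2 * a (m + c + 1)) :
    (∏ j ∈ Icc 1 (c + 1), d j) * t ^ pairingSlack m c a d ≤
      2 * ((∏ k ∈ range c, a (m + 1 + k)) * a (m + c + 1)) * (t + 1) ^ pairingSlack m c a d := by
  have hmid := prod_mul_pow_le_prod_mul_succ_pow (s := range c) (x := fun k ↦ a (m + 1 + k))
    (y := fun k ↦ d (k + 1)) (t := t)
    fun k hk ↦ ⟨hta k (mem_range.mp hk), hpair k (mem_range.mp hk)⟩
  have htop := Nat.mul_pow_sub_le_mul_succ_pow_sub htc hdc
  rw [prod_Icc_succ_eq_prod_range_mul, pairingSlack, pow_add, pow_add]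
  calc _ = ((∏ k ∈ range c, d (k + 1)) * t ^ ∑ k ∈ range c, (d (k + 1) - a (m + 1 + k))) *
        (d (c + 1) * t ^ (d (c + 1) - 2 * a (m + c + 1))) := by ring
    _ ≤ ((∏ k ∈ range c, a (m + 1 + k)) * (t + 1) ^ ∑ k ∈ range c, (d (k + 1) - a (m + 1 + k))) *
        (2 * a (m + c + 1) * (t + 1) ^ (d (c + 1) - 2 * a (m + c + 1))) := by gcongr
    _ = _ := by ring

theorem last_weight_le (ha_pos : ∀ i ≤ m, 0 < a i)
    (ha_mono : ∀ i j : ℕ, i ≤ j → j ≤ m + c + 1 → a i ≤ a j)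
    (hpair : ∀ k < c, a (m + 1 + k) ≤ d (k + 1)) (hdc : 2 * a (m + c + 1) ≤ d (c + 1))
    (hprod : ∏ i ∈ range (m + c + 1 + 1), a i ≤ ∏ j ∈ Icc 1 (c + 1), d j)
    (hsum : ∑ j ∈ Icc 1 (c + 1), d j < ∑ i ∈ range (m + c + 1 + 1), a i) :
    a (m + c + 1) ≤ m + c + 1 := by
  by_contra! hN
  have hsmall : ∀ i ∈ range (m + 1), 1 ≤ a i ∧ a i ≤ a m := fun i hi ↦
    have hi : i ≤ m := Nat.lt_succ_iff.mp (mem_range.mp hi)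
    ⟨ha_pos i hi, ha_mono i m hi (by omega)⟩
  have hslack : pairingSlack m c a d + 2 ≤ ∑ i ∈ range (m + 1), (a i - 1) := by
    have hcount : ∑ i ∈ range (m + 1), a i = ∑ i ∈ range (m + 1), (a i - 1) + (m + 1) :=
      calc ∑ i ∈ range (m + 1), a i = ∑ i ∈ range (m + 1), ((a i - 1) + 1) :=
            sum_congr rfl fun i hi ↦ by have := hsmall i hi; omega
        _ = _ := by rw [sum_add_distrib, sum_const, card_range, smul_eq_mul, mul_one]
    rw [sum_Icc_eq_add_pairingSlack hpair hdc, sum_range_succ_add_succ, hcount] at hsum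
    omega
  have hpos : ∀ j ≤ m + c + 1, 0 < a j := fun j hj ↦
    (ha_pos 0 (Nat.zero_le m)).trans_le (ha_mono 0 j (Nat.zero_le j) hj)
  have hQN : 0 < (∏ k ∈ range c, a (m + 1 + k)) * a (m + c + 1) :=
    Nat.mul_pos (prod_pos fun k hk ↦ hpos _ (by have := mem_range.mp hk; omega)) (hpos _ le_rfl)
  refine (two_mul_succ_pow_lt_prod_mul_pow hsmall ⟨m, by simp, rfl⟩ hslack).not_ge
    (Nat.le_of_mul_le_mul_right ?_ hQN)
  calc (∏ i ∈ range (m + 1), a i) * a m ^ pairingSlack m c a d *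
        ((∏ k ∈ range c, a (m + 1 + k)) * a (m + c + 1))
      = (∏ i ∈ range (m + c + 1 + 1), a i) * a m ^ pairingSlack m c a d := by
        rw [prod_range_succ_add_succ]; ring
    _ ≤ (∏ j ∈ Icc 1 (c + 1), d j) * a m ^ pairingSlack m c a d := by gcongr
    _ ≤ 2 * ((∏ k ∈ range c, a (m + 1 + k)) * a (m + c + 1)) * (a m + 1) ^ pairingSlack m c a d :=
        prod_Icc_mul_pow_pairingSlack_le hpair hdc (fun k _ ↦ ha_mono m _ (by omega) (by omega))
          ((ha_mono m _ (by omega) le_rfl).trans (by omega))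
    _ = _ := by ring

end Pairing

theorem stmt_10_general (n c : ℕ) (hc : 1 ≤ c) (hnc : 2 * c + 1 ≤ n + 1)
    (a d : ℕ → ℕ)
    (ha_pos : ∀ i : ℕ, i ≤ n → 0 < a i)
    (ha_mono : ∀ i j : ℕ, i ≤ j → j ≤ n → a i ≤ a j)
    (hdc : 2 * a n ≤ d c)
    (hk : ∀ k : ℕ, 1 ≤ k → k ≤ c - 1 → a (n - k) < d (c - k))
    (hprod : ∏ i ∈ Finset.range (n + 1), a i ≤ ∏ j ∈ Finset.Icc 1 c, d j)
    (hsum : ∑ j ∈ Finset.Icc 1 c, d j < ∑ i ∈ Finset.range (n + 1), a i) :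
    (∀ i : ℕ, i ≤ n → a i ≤ n) ∧
      (∀ j : ℕ, 1 ≤ j → j ≤ c → d j ≤ n * (n + 1)) := by
  have hlast : a n ≤ n := by
    obtain ⟨c, rfl⟩ : ∃ c', c = c' + 1 := ⟨c - 1, by omega⟩
    obtain ⟨m, rfl⟩ : ∃ m, n = m + c + 1 := ⟨n - c - 1, by omega⟩
    refine last_weight_le (fun i hi ↦ ha_pos i (by omega)) ha_mono (fun k hkc ↦ ?_) hdc hprod hsum
    have := hk (c - k) (by omega) (by omega)
    rw [show m + c + 1 - (c - k) = m + 1 + k by omega,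
      show c + 1 - (c - k) = k + 1 by omega] at this
    exact this.le
  refine ⟨fun i hi ↦ (ha_mono i n hi le_rfl).trans hlast, fun j hj1 hj2 ↦ ?_⟩
  calc d j ≤ ∑ j ∈ Icc 1 c, d j := single_le_sum (fun _ _ ↦ Nat.zero_le _) (mem_Icc.mpr ⟨hj1, hj2⟩)
    _ ≤ ∑ i ∈ range (n + 1), a i := hsum.le
    _ ≤ ∑ i ∈ range (n + 1), n :=
        sum_le_sum fun i hi ↦
          (ha_mono i n (Nat.lt_succ_iff.mp (mem_range.mp hi)) le_rfl).trans hlast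
    _ = n * (n + 1) := by rw [sum_const, card_range, smul_eq_mul, mul_comm]

/-- numerical content of the Fano case of the main theorem.
Weights are encoded as `a : ℕ → ℕ` with relevant values `a 0, …, a n`, and
degrees as `d : ℕ → ℕ` with relevant values `d 1, …, d c`.  Let `n ≥ 2`,
`c ≥ 1`, `n + 1 ≥ 2c + 1`, with `a_0 ≤ … ≤ a_n` and `d_1 ≤ … ≤ d_c`
positive integers such that `d_c ≥ 2a_n`, `d_{c-k} > a_{n-k}` for all
`1 ≤ k ≤ c-1`, `a_0⋯a_n ≤ d_1⋯d_c`, and `a_0 + … + a_n > d_1 + … + d_c`.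
Then `a_i ≤ n` for every `0 ≤ i ≤ n` and `d_j ≤ n(n+1)` for every
`1 ≤ j ≤ c`. -/
theorem stmt_10 (n c : ℕ) (hn : 2 ≤ n) (hc : 1 ≤ c) (hnc : 2 * c + 1 ≤ n + 1)
    (a d : ℕ → ℕ)
    (ha_pos : ∀ i : ℕ, i ≤ n → 0 < a i)
    (hd_pos : ∀ j : ℕ, 1 ≤ j → j ≤ c → 0 < d j)
    (ha_mono : ∀ i j : ℕ, i ≤ j → j ≤ n → a i ≤ a j)
    (hd_mono : ∀ i j : ℕ, 1 ≤ i → i ≤ j → j ≤ c → d i ≤ d j)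
    (hdc : 2 * a n ≤ d c)
    (hk : ∀ k : ℕ, 1 ≤ k → k ≤ c - 1 → a (n - k) < d (c - k))
    (hprod : ∏ i ∈ Finset.range (n + 1), a i ≤ ∏ j ∈ Finset.Icc 1 c, d j)
    (hsum : ∑ j ∈ Finset.Icc 1 c, d j < ∑ i ∈ Finset.range (n + 1), a i) :
    (∀ i : ℕ, i ≤ n → a i ≤ n) ∧
      (∀ j : ℕ, 1 ≤ j → j ≤ c → d j ≤ n * (n + 1)) :=
  stmt_10_general n c hc hnc a d ha_pos ha_mono hdc hk hprod hsum
end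

section
/- Let n ≥ 2 and c ≥ 1 be integers with n + 2 ≥ 2c + 1, and let a_0 ≤ a_1 ≤ … ≤ a_n and d_1 ≤ d_2 ≤ … ≤ d_c be positive integers satisfying: d_c ≥ 2a_n; d_{c−k} > a_{n−k} for all 1 ≤ k ≤ c−1; a_0⋯a_n ≤ d_1⋯d_c; and a_0 + a_1 + … + a_n = d_1 + … + d_c. Then a_i ≤ n + 1 for every 0 ≤ i ≤ n, and d_j ≤ (n+1)² for every 1 ≤ j ≤ c. -/
/-- Bernoulli-type: `(a+1)^k * (a+1-k) ≤ (a+1) * a^k` for `k ≤ a+1`. -/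
lemma nat_bern (a : ℕ) : ∀ k : ℕ, k ≤ a + 1 → (a+1)^k * (a+1-k) ≤ (a+1) * a^k := by
  intro k
  induction k with
  | zero => simp
  | succ k ih =>
    intro hk
    have hk' : k ≤ a + 1 := by omega
    have h1 : a + 1 - (k+1) = a - k := by omega
    rw [h1, pow_succ]
    have h2 : (a+1) * (a-k) ≤ a * (a+1-k) := by
      have hka : k ≤ a := by omega
      obtain ⟨u, hu⟩ := Nat.exists_eq_add_of_le hka
      have e1 : a - k = u := by omega
      have e2 : a + 1 - k = u + 1 := by omega
      rw [e1, e2, hu]; nlinarith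
    calc (a+1)^k * (a+1) * (a-k) = (a+1)^k * ((a+1) * (a-k)) := by ring
      _ ≤ (a+1)^k * (a * (a+1-k)) := Nat.mul_le_mul_left _ h2
      _ = a * ((a+1)^k * (a+1-k)) := by ring
      _ ≤ a * ((a+1) * a^k) := Nat.mul_le_mul_left _ (ih hk')
      _ = (a+1) * a^(k+1) := by ring

/-- Bernoulli: `(x+n) * x^n ≤ (x+1)^n * x`. -/
lemma nat_bern2 (x : ℕ) : ∀ n : ℕ, (x + n) * x^n ≤ (x+1)^n * x := by
  intro n
  induction n with
  | zero => simp
  | succ n ih =>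
    have h2 : (x + n + 1) * x ≤ (x+1) * (x+n) := by nlinarith
    calc (x + (n+1)) * x^(n+1) = ((x + n + 1) * x) * x^n := by ring
      _ ≤ ((x+1) * (x+n)) * x^n := Nat.mul_le_mul_right _ h2
      _ = (x+1) * ((x+n) * x^n) := by ring
      _ ≤ (x+1) * ((x+1)^n * x) := Nat.mul_le_mul_left _ ih
      _ = (x+1)^(n+1) * x := by ring

/-- `(p+2)^(p+2) * p^(p+1) ≤ (p+1)^(2p+3)` (monotonicity step for `(1+1/n)^(n+1)`). -/
lemma step_y (p : ℕ) : (p+2)^(p+2) * p^(p+1) ≤ (p+1)^(2*p+3) := by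
  have hb := nat_bern2 (p*(p+2)) (p+1)
  have hx1 : p*(p+2) + 1 = (p+1)^2 := by ring
  rw [hx1] at hb
  -- hb : (p*(p+2) + (p+1)) * (p*(p+2))^(p+1) ≤ ((p+1)^2)^(p+1) * (p*(p+2))
  have hb' : (p^2+3*p+1) * (p^(p+1) * (p+2)^(p+1)) ≤ (p+1)^(2*p+2) * (p*(p+2)) := by
    calc (p^2+3*p+1) * (p^(p+1) * (p+2)^(p+1))
        = (p*(p+2) + (p+1)) * (p*(p+2))^(p+1) := by rw [mul_pow]; ring
      _ ≤ ((p+1)^2)^(p+1) * (p*(p+2)) := hb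
      _ = (p+1)^(2*p+2) * (p*(p+2)) := by rw [← pow_mul]; ring_nf
  have key : ((p+2)^(p+2) * p^(p+1)) * (p^2+3*p+1) ≤ ((p+1)^(2*p+3)) * (p^2+3*p+1) := by
    calc ((p+2)^(p+2) * p^(p+1)) * (p^2+3*p+1)
        = (p+2) * ((p^2+3*p+1) * (p^(p+1) * (p+2)^(p+1))) := by rw [pow_succ]; ring
      _ ≤ (p+2) * ((p+1)^(2*p+2) * (p*(p+2))) := Nat.mul_le_mul_left _ hb'
      _ = (p+1)^(2*p+2) * (p*(p+2)^2) := by ring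
      _ ≤ (p+1)^(2*p+2) * ((p+1)*(p^2+3*p+1)) := Nat.mul_le_mul_left _ (by nlinarith)
      _ = ((p+1)^(2*p+3)) * (p^2+3*p+1) := by rw [pow_succ]; ring
  exact Nat.le_of_mul_le_mul_right key (by positivity)

/-- `(1+1/B)^(B+1)` decreasing gives `(B+1)^(B+1) * 5^6 ≤ 6^6 * B^(B+1)` for `B ≥ 5`. -/
lemma y_le (B : ℕ) (hB : 5 ≤ B) : (B+1)^(B+1) * 15625 ≤ 46656 * B^(B+1) := by
  induction B, hB using Nat.le_induction with
  | base => norm_num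
  | succ n hn ih =>
    have hs := step_y n
    have key : ((n+2)^(n+2) * 15625) * n^(n+1) ≤ (46656 * (n+1)^(n+2)) * n^(n+1) := by
      calc ((n+2)^(n+2) * 15625) * n^(n+1) = 15625 * ((n+2)^(n+2) * n^(n+1)) := by ring
        _ ≤ 15625 * (n+1)^(2*n+3) := Nat.mul_le_mul_left _ hs
        _ = (n+1)^(n+2) * ((n+1)^(n+1) * 15625) := by rw [show 2*n+3 = (n+2)+(n+1) by omega, pow_add]; ring
        _ ≤ (n+1)^(n+2) * (46656 * n^(n+1)) := Nat.mul_le_mul_left _ ih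
        _ = (46656 * (n+1)^(n+2)) * n^(n+1) := by ring
    exact Nat.le_of_mul_le_mul_right key (by positivity)

/-- `(B+1)^B ≤ 3 B^B`, i.e. `(1+1/B)^B < 3`. -/
lemma L3 (B : ℕ) : (B+1)^B ≤ 3 * B^B := by
  rcases le_or_gt B 4 with h | h
  · interval_cases B <;> norm_num
  · have hy := y_le B (by omega)
    have key : ((B+1)^B) * (15625*(B+1)) ≤ (3 * B^B) * (15625*(B+1)) := by
      calc ((B+1)^B) * (15625*(B+1)) = (B+1)^(B+1) * 15625 := by rw [pow_succ]; ring
        _ ≤ 46656 * B^(B+1) := hy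
        _ ≤ 46875 * B^(B+1) := Nat.mul_le_mul_right _ (by norm_num)
        _ = (3 * B^B) * (15625 * B) := by rw [pow_succ]; ring
        _ ≤ (3 * B^B) * (15625 * (B+1)) := Nat.mul_le_mul_left _ (by omega)
    exact Nat.le_of_mul_le_mul_right key (by positivity)

lemma L3' (B : ℕ) (hB : 1 ≤ B) : (B+1)^(B-1) ≤ 3 * B^(B-1) := by
  obtain ⟨b, rfl⟩ : ∃ b, B = b + 1 := ⟨B - 1, by omega⟩
  simp only [Nat.add_sub_cancel]
  have h := L3 (b+1)
  have key : (b+1+1)^b * (b+2) ≤ (3 * (b+1)^b) * (b+2) := by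
    calc (b+1+1)^b * (b+2) = (b+1+1)^(b+1) := by rw [pow_succ]
      _ ≤ 3 * (b+1)^(b+1) := h
      _ = (3*(b+1)^b) * (b+1) := by rw [pow_succ]; ring
      _ ≤ (3*(b+1)^b) * (b+2) := Nat.mul_le_mul_left _ (by omega)
  exact Nat.le_of_mul_le_mul_right key (by omega)

/-- key exponential comparison for the small-B case. -/
lemma claim3 (B k : ℕ) (hB : 2 ≤ B) (hk : B + 1 ≤ k) :
    2^(B-1) * (B+1)^(k*(B-1)) < B^(k*B+k+2) := by
  obtain ⟨b, rfl⟩ : ∃ b, B = b + 2 := ⟨B - 2, by omega⟩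
  have hsub : b + 2 - 1 = b + 1 := rfl
  rw [hsub]
  have h1 : (b+3)^(k*(b+1)) ≤ 3^k * (b+2)^(k*(b+1)) := by
    calc (b+3)^(k*(b+1)) = ((b+3)^(b+1))^k := by rw [← pow_mul, Nat.mul_comm]
      _ ≤ (3 * (b+2)^(b+1))^k := by
          apply Nat.pow_le_pow_left
          have := L3' (b+2) (by omega)
          rw [hsub] at this
          convert this using 2 <;> omega
      _ = 3^k * ((b+2)^(b+1))^k := mul_pow _ _ _
      _ = 3^k * (b+2)^(k*(b+1)) := by rw [← pow_mul, Nat.mul_comm (b+1) k]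
  have h2 : 2^(b+1) * 3^k < (b+2)^(2*k+2) := by
    rcases Nat.eq_zero_or_pos b with hb | hb
    · -- B = 2
      subst hb
      simp only [Nat.zero_add]
      have e : (2:ℕ)^(2*k+2) = 4^k * 4 := by
        rw [show 2*k+2 = 2*k+2 from rfl, pow_add, pow_mul]; norm_num
      rw [e, pow_one]
      have h3 : (3:ℕ)^k ≤ 4^k := Nat.pow_le_pow_left (by norm_num) k
      have h4 : (0:ℕ) < 4^k := by positivity
      omega
    · -- B ≥ 3
      have e1 : 2^(b+1) < 3^(k+2) := by
        calc 2^(b+1) < 3^(b+1) := Nat.pow_lt_pow_left (by norm_num) (by omega)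
          _ ≤ 3^(k+2) := Nat.pow_le_pow_right (by norm_num) (by omega)
      calc 2^(b+1) * 3^k < 3^(k+2) * 3^k := by
            exact Nat.mul_lt_mul_of_lt_of_le e1 le_rfl (by positivity)
        _ = 3^(2*k+2) := by rw [← pow_add]; ring_nf
        _ ≤ (b+2)^(2*k+2) := Nat.pow_le_pow_left (by omega) _
  calc 2^(b+1) * (b+3)^(k*(b+1))
      ≤ 2^(b+1) * (3^k * (b+2)^(k*(b+1))) := Nat.mul_le_mul_left _ h1
    _ = (2^(b+1) * 3^k) * (b+2)^(k*(b+1)) := by ring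
    _ < (b+2)^(2*k+2) * (b+2)^(k*(b+1)) := by
        exact Nat.mul_lt_mul_of_lt_of_le h2 le_rfl (by positivity)
    _ = (b+2)^(k*(b+2)+k+2) := by rw [← pow_add]; congr 1; ring

/-- `(b+1)^t ≤ (t+1)^b` for `t ≤ b`  (i.e. `B^(s-1) ≤ s^(B-1)` for `s ≤ B`). -/
lemma L4 (t : ℕ) : ∀ b : ℕ, t ≤ b → (b+1)^t ≤ (t+1)^b := by
  intro b hb
  induction b, hb using Nat.le_induction with
  | base => rfl
  | succ b hb ih =>
    have l5 : (b+2)^t ≤ (t+1) * (b+1)^t := by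
      have h1 := nat_bern (b+1) t (by omega)
      have h2 : b + 2 ≤ (t+1) * (b+1+1-t) := by
        obtain ⟨u, hu⟩ : ∃ u, b + 1 - t = u := ⟨b+1-t, rfl⟩
        have h3 : b+1+1-t = u+1 := by omega
        have h4 : b + 2 = t + u + 1 := by omega
        rw [h3, h4]; nlinarith [Nat.zero_le (t*u)]
      have key : (b+2)^t * (b+1+1-t) ≤ ((t+1) * (b+1)^t) * (b+1+1-t) := by
        calc (b+2)^t * (b+1+1-t) = (b+1+1)^t * (b+1+1-t) := by norm_num
          _ ≤ (b+1+1) * (b+1)^t := h1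
          _ = (b+2) * (b+1)^t := by norm_num
          _ ≤ ((t+1) * (b+1+1-t)) * (b+1)^t := Nat.mul_le_mul_right _ h2
          _ = ((t+1) * (b+1)^t) * (b+1+1-t) := by ring
      exact Nat.le_of_mul_le_mul_right key (by omega)
    calc (b+1+1)^t = (b+2)^t := by norm_num
      _ ≤ (t+1) * (b+1)^t := l5
      _ ≤ (t+1) * (t+1)^b := Nat.mul_le_mul_left _ ih
      _ = (t+1)^(b+1) := by rw [pow_succ]; ring

/-- Sum of positive naturals is at most product plus count minus one. -/
lemma sum_add_one_le_prod_add (a : ℕ → ℕ) :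
    ∀ m : ℕ, (∀ i, i < m → 1 ≤ a i) →
      (∑ i ∈ Finset.range m, a i) + 1 ≤ (∏ i ∈ Finset.range m, a i) + m := by
  intro m
  induction m with
  | zero => simp
  | succ m ih =>
    intro h
    rw [Finset.sum_range_succ, Finset.prod_range_succ]
    have h1 := ih fun i hi => h i (hi.trans (Nat.lt_succ_self m))
    have hp : 1 ≤ ∏ i ∈ Finset.range m, a i :=
      Finset.one_le_prod' fun i hi => h i ((Finset.mem_range.mp hi).trans (Nat.lt_succ_self m))
    have ha : 1 ≤ a m := h m (Nat.lt_succ_self m)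
    have key : (∏ i ∈ Finset.range m, a i) + a m ≤ (∏ i ∈ Finset.range m, a i) * a m + 1 := by
      obtain ⟨p, hpe⟩ := Nat.exists_eq_add_of_le hp
      obtain ⟨q, hqe⟩ := Nat.exists_eq_add_of_le ha
      rw [hpe, hqe]; nlinarith
    omega

/-- decrement step: if `X*s ≤ Y*v` and `s ≤ v` then `X*(s-1) ≤ Y*(v-1)`. -/
lemma dec_step (X Y s v : ℕ) (h : X * s ≤ Y * v) (hsv : s ≤ v) :
    X * (s-1) ≤ Y * (v-1) := by
  rcases Nat.eq_zero_or_pos s with hs | hs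
  · simp [hs]
  · obtain ⟨s', rfl⟩ : ∃ s', s = s' + 1 := ⟨s - 1, by omega⟩
    obtain ⟨v', rfl⟩ : ∃ v', v = v' + 1 := ⟨v - 1, by omega⟩
    simp only [Nat.add_sub_cancel]
    have hsv' : s' ≤ v' := by omega
    have h2 : (X*s' + X) * v' ≤ (Y*v' + Y) * v' := by
      apply Nat.mul_le_mul_right
      calc X*s' + X = X * (s'+1) := by ring
        _ ≤ Y * (v'+1) := h
        _ = Y*v' + Y := by ring
    have h3 : X * s' ≤ X * v' := Nat.mul_le_mul_left _ hsv'
    have key : (X * s') * (v'+1) ≤ (Y * v') * (v'+1) := by nlinarith [h2, h3]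
    exact Nat.le_of_mul_le_mul_right key (by omega)

/-- The key combinatorial lemma. -/
theorem key_lemma (σ : ℕ) : ∀ (m c B : ℕ) (s A e : ℕ → ℕ),
    1 ≤ c → 1 ≤ m →
    (∀ i, i < m → 1 ≤ s i) → (∀ i, i < m → s i ≤ B) →
    (∀ k, k < c → B ≤ A k) → A 0 ≤ e 0 → (∀ k, 1 ≤ k → k < c → 1 ≤ e k) →
    (∑ i ∈ Finset.range m, s i = σ) → (∑ k ∈ Finset.range c, e k = σ) →
    ((∏ i ∈ Finset.range m, s i) * (∏ k ∈ Finset.range c, A k) ≤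
      ∏ k ∈ Finset.range c, (A k + e k)) →
    A 0 ≤ m + c := by
  induction σ using Nat.strong_induction_on with
  | _ σ IH =>
  intro m c B s A e hc hm hs1 hsB hBA he0 hek hσs hσe hprod
  by_contra hA0
  push_neg at hA0
  have h0c : (0:ℕ) ∈ Finset.range c := Finset.mem_range.mpr (by omega)
  -- sum of e is at least A 0 + (c-1)
  have herase1 : ∀ j ∈ (Finset.range c).erase 0, 1 ≤ e j := by
    intro j hj
    have hj1 := Finset.mem_erase.mp hj
    exact hek j (by omega) (Finset.mem_range.mp hj1.2)
  have hcard : ((Finset.range c).erase 0).card = c - 1 := by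
    rw [Finset.card_erase_of_mem h0c, Finset.card_range]
  have h1 : A 0 + (c-1) ≤ σ := by
    have hsplit : e 0 + ∑ j ∈ (Finset.range c).erase 0, e j = σ := by
      rw [Finset.add_sum_erase _ e h0c]; exact hσe
    have hlow : (c-1) * 1 ≤ ∑ j ∈ (Finset.range c).erase 0, e j := by
      calc (c-1) * 1 = ((Finset.range c).erase 0).card • 1 := by rw [hcard, smul_eq_mul]
        _ ≤ ∑ j ∈ (Finset.range c).erase 0, e j := Finset.card_nsmul_le_sum _ _ _ herase1
    omega
  have hmσ : m + 2*c ≤ σ := by omega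
  -- σ ≤ m * B
  have hσmB : σ ≤ m * B := by
    rw [← hσs]
    calc ∑ i ∈ Finset.range m, s i ≤ ∑ _i ∈ Finset.range m, B :=
          Finset.sum_le_sum fun i hi => hsB i (Finset.mem_range.mp hi)
      _ = m * B := by rw [Finset.sum_const, Finset.card_range, smul_eq_mul]
  have hB2 : 2 ≤ B := by nlinarith
  -- there is a small weight ≥ 2
  have hex : ∃ i, i < m ∧ 2 ≤ s i := by
    by_contra hno
    push_neg at hno
    have : σ ≤ m * 1 := by
      rw [← hσs]
      calc ∑ i ∈ Finset.range m, s i ≤ ∑ _i ∈ Finset.range m, 1 :=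
            Finset.sum_le_sum fun i hi => by
              have := hno i (Finset.mem_range.mp hi); omega
        _ = m * 1 := by rw [Finset.sum_const, Finset.card_range, smul_eq_mul]
    omega
  obtain ⟨i, him, hsi2⟩ := hex
  have him' : i ∈ Finset.range m := Finset.mem_range.mpr him
  by_cases hslack : A 0 + (c-1) < σ
  · -- slack: find a decrementable e-coordinate
    have hexk : ∃ k, k < c ∧ ((k = 0 ∧ A 0 + 1 ≤ e 0) ∨ (1 ≤ k ∧ 2 ≤ e k)) := by
      by_contra hno
      push_neg at hno
      have hb0 : e 0 ≤ A 0 := by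
        have := (hno 0 (by omega)).1 rfl
        omega
      have hbk : ∀ j ∈ (Finset.range c).erase 0, e j ≤ 1 := by
        intro j hj
        have hj1 := Finset.mem_erase.mp hj
        have := (hno j (Finset.mem_range.mp hj1.2)).2 (by
          have := hj1.1
          omega)
        omega
      have : σ ≤ A 0 + (c-1) := by
        have hsplit : e 0 + ∑ j ∈ (Finset.range c).erase 0, e j = σ := by
          rw [Finset.add_sum_erase _ e h0c]; exact hσe
        have hup : ∑ j ∈ (Finset.range c).erase 0, e j ≤ (c-1) * 1 := by
          calc ∑ j ∈ (Finset.range c).erase 0, e j ≤ ∑ _j ∈ (Finset.range c).erase 0, 1 :=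
                Finset.sum_le_sum hbk
            _ = (c-1) * 1 := by rw [Finset.sum_const, hcard, smul_eq_mul]
        omega
      omega
    obtain ⟨k, hkc, hkprop⟩ := hexk
    have hkc' : k ∈ Finset.range c := Finset.mem_range.mpr hkc
    have hek1 : 1 ≤ e k := by rcases hkprop with ⟨rfl, h⟩ | ⟨_, h⟩ <;> omega
    set s' := Function.update s i (s i - 1) with hs'
    set e' := Function.update e k (e k - 1) with he'
    have hσs' : ∑ j ∈ Finset.range m, s' j = σ - 1 := by
      rw [hs', Finset.sum_update_of_mem him', ← Finset.erase_eq]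
      have := Finset.add_sum_erase _ s him'
      omega
    have hσe' : ∑ j ∈ Finset.range c, e' j = σ - 1 := by
      rw [he', Finset.sum_update_of_mem hkc', ← Finset.erase_eq]
      have := Finset.add_sum_erase _ e hkc'
      omega
    have hprod' : (∏ j ∈ Finset.range m, s' j) * (∏ j ∈ Finset.range c, A j) ≤
        ∏ j ∈ Finset.range c, (A j + e' j) := by
      have hL : ∏ j ∈ Finset.range m, s' j
          = (s i - 1) * ∏ j ∈ (Finset.range m).erase i, s j := by
        rw [hs', Finset.prod_update_of_mem him', ← Finset.erase_eq]
      have hR : ∏ j ∈ Finset.range c, (A j + e' j)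
          = (A k + e k - 1) * ∏ j ∈ (Finset.range c).erase k, (A j + e j) := by
        have hpt : ∀ j ∈ Finset.range c,
            A j + e' j = Function.update (fun j => A j + e j) k (A k + e k - 1) j := by
          intro j _
          rcases eq_or_ne j k with rfl | hne
          · rw [he']; simp [Function.update_self]
            omega
          · rw [he']; simp [Function.update_of_ne hne]
        rw [Finset.prod_congr rfl hpt, Finset.prod_update_of_mem hkc', ← Finset.erase_eq]
      have hO : (∏ j ∈ (Finset.range m).erase i, s j) * (s i) * (∏ j ∈ Finset.range c, A j)
          ≤ (∏ j ∈ (Finset.range c).erase k, (A j + e j)) * (A k + e k) := by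
        calc (∏ j ∈ (Finset.range m).erase i, s j) * (s i) * (∏ j ∈ Finset.range c, A j)
            = (∏ j ∈ Finset.range m, s j) * (∏ j ∈ Finset.range c, A j) := by
              rw [mul_comm (∏ j ∈ (Finset.range m).erase i, s j) (s i),
                Finset.mul_prod_erase _ s him']
          _ ≤ ∏ j ∈ Finset.range c, (A j + e j) := hprod
          _ = (∏ j ∈ (Finset.range c).erase k, (A j + e j)) * (A k + e k) := by
              rw [← Finset.mul_prod_erase _ _ hkc', mul_comm]
      have hsv : s i ≤ A k + e k := by
        have h1 : s i ≤ B := hsB i him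
        have h2 : B ≤ A k := hBA k hkc
        omega
      have hD := dec_step ((∏ j ∈ (Finset.range m).erase i, s j) * (∏ j ∈ Finset.range c, A j))
        (∏ j ∈ (Finset.range c).erase k, (A j + e j)) (s i) (A k + e k)
        (by calc (∏ j ∈ (Finset.range m).erase i, s j) * (∏ j ∈ Finset.range c, A j) * s i
              = (∏ j ∈ (Finset.range m).erase i, s j) * (s i) * (∏ j ∈ Finset.range c, A j) := by ring
            _ ≤ (∏ j ∈ (Finset.range c).erase k, (A j + e j)) * (A k + e k) := hO) hsv
      rw [hL, hR]
      calc ((s i - 1) * ∏ j ∈ (Finset.range m).erase i, s j) * (∏ j ∈ Finset.range c, A j)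
          = ((∏ j ∈ (Finset.range m).erase i, s j) * (∏ j ∈ Finset.range c, A j)) * (s i - 1) := by ring
        _ ≤ (∏ j ∈ (Finset.range c).erase k, (A j + e j)) * (A k + e k - 1) := hD
        _ = (A k + e k - 1) * ∏ j ∈ (Finset.range c).erase k, (A j + e j) := by ring
    have hres := IH (σ - 1) (by omega) m c B s' A e' hc hm
      (fun j hj => by
        rcases eq_or_ne j i with rfl | hne
        · rw [hs']; simp [Function.update_self]; omega
        · rw [hs']; simp [Function.update_of_ne hne]; exact hs1 j hj)
      (fun j hj => by
        rcases eq_or_ne j i with rfl | hne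
        · rw [hs']; simp [Function.update_self]
          have := hsB j hj; omega
        · rw [hs']; simp [Function.update_of_ne hne]; exact hsB j hj)
      hBA
      (by
        rcases eq_or_ne (0:ℕ) k with rfl | hne
        · rw [he']; simp [Function.update_self]
          rcases hkprop with ⟨_, h⟩ | ⟨h, _⟩
          · omega
          · omega
        · rw [he', Function.update_of_ne hne]; exact he0)
      (fun j hj1 hjc => by
        rcases eq_or_ne j k with rfl | hne
        · rw [he']; simp [Function.update_self]
          rcases hkprop with ⟨h, _⟩ | ⟨_, h⟩
          · omega
          · omega
        · rw [he']; simp [Function.update_of_ne hne]; exact hek j hj1 hjc)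
      hσs' hσe' hprod'
    omega
  · -- no slack: σ = A 0 + (c-1), e is minimal
    have hσeq : σ = A 0 + (c-1) := by omega
    -- each e j = 1 for j ≥ 1, and e 0 = A 0
    have he00 : e 0 = A 0 := by
      have hsplit : e 0 + ∑ j ∈ (Finset.range c).erase 0, e j = σ := by
        rw [Finset.add_sum_erase _ e h0c]; exact hσe
      have hlow : (c-1) * 1 ≤ ∑ j ∈ (Finset.range c).erase 0, e j := by
        calc (c-1) * 1 = ((Finset.range c).erase 0).card • 1 := by rw [hcard, smul_eq_mul]
          _ ≤ ∑ j ∈ (Finset.range c).erase 0, e j := Finset.card_nsmul_le_sum _ _ _ herase1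
      omega
    have hek1 : ∀ j ∈ (Finset.range c).erase 0, e j = 1 := by
      intro j hj
      have hj1 := Finset.mem_erase.mp hj
      have hsplit : e 0 + ∑ l ∈ (Finset.range c).erase 0, e l = σ := by
        rw [Finset.add_sum_erase _ e h0c]; exact hσe
      have hsplit2 : e j + ∑ l ∈ ((Finset.range c).erase 0).erase j, e l
          = ∑ l ∈ (Finset.range c).erase 0, e l := Finset.add_sum_erase _ e hj
      have hcard2 : (((Finset.range c).erase 0).erase j).card = c - 2 := by
        rw [Finset.card_erase_of_mem hj, hcard]
        have : 1 ≤ c - 1 := by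
          have := Finset.mem_range.mp hj1.2
          have : j ≠ 0 := hj1.1
          omega
        omega
      have hlow2 : (c-2) * 1 ≤ ∑ l ∈ ((Finset.range c).erase 0).erase j, e l := by
        calc (c-2) * 1 = (((Finset.range c).erase 0).erase j).card • 1 := by
              rw [hcard2, smul_eq_mul]
          _ ≤ _ := Finset.card_nsmul_le_sum _ _ _
              (fun l hl => herase1 l (Finset.mem_of_mem_erase hl))
      have hj2 : 1 ≤ e j := herase1 j hj
      have hc2 : 2 ≤ c := by
        have := Finset.mem_range.mp hj1.2
        have : j ≠ 0 := hj1.1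
        omega
      omega
    set K := (Finset.range c).erase 0 with hK
    set P := ∏ i ∈ Finset.range m, s i with hP
    have hRHS : ∏ j ∈ Finset.range c, (A j + e j) = (2 * A 0) * ∏ j ∈ K, (A j + 1) := by
      rw [← Finset.mul_prod_erase _ _ h0c, he00]
      have e1 : A 0 + A 0 = 2 * A 0 := by ring
      rw [e1]
      congr 1
      exact Finset.prod_congr rfl (fun j hj => by rw [hek1 j hj])
    have hLHS : ∏ j ∈ Finset.range c, A j = A 0 * ∏ j ∈ K, A j :=
      (Finset.mul_prod_erase _ _ h0c).symm
    have hA0pos : 0 < A 0 := lt_of_lt_of_le (by omega : (0:ℕ) < B) (hBA 0 (by omega))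
    have hP2 : P * ∏ j ∈ K, A j ≤ 2 * ∏ j ∈ K, (A j + 1) := by
      have hthis := hprod
      rw [hLHS, hRHS] at hthis
      have h' : A 0 * (P * ∏ j ∈ K, A j) ≤ A 0 * (2 * ∏ j ∈ K, (A j + 1)) := by
        calc A 0 * (P * ∏ j ∈ K, A j) = P * (A 0 * ∏ j ∈ K, A j) := by ring
          _ ≤ (2 * A 0) * ∏ j ∈ K, (A j + 1) := hthis
          _ = A 0 * (2 * ∏ j ∈ K, (A j + 1)) := by ring
      exact Nat.le_of_mul_le_mul_left h' hA0pos
    have hstep : ∀ j ∈ K, B * (A j + 1) ≤ (B+1) * A j := by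
      intro j hj
      have h := hBA j (Finset.mem_range.mp (Finset.mem_of_mem_erase hj))
      nlinarith
    have hprodK_pos : 0 < ∏ j ∈ K, A j :=
      Finset.prod_pos (fun j hj => lt_of_lt_of_le (by omega)
        (hBA j (Finset.mem_range.mp (Finset.mem_of_mem_erase hj))))
    have hP3 : P * B^(c-1) ≤ 2 * (B+1)^(c-1) := by
      have hh : B^(c-1) * ∏ j ∈ K, (A j + 1) ≤ (B+1)^(c-1) * ∏ j ∈ K, A j := by
        calc B^(c-1) * ∏ j ∈ K, (A j + 1) = ∏ j ∈ K, (B * (A j + 1)) := by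
              rw [Finset.prod_mul_distrib, Finset.prod_const, hcard]
          _ ≤ ∏ j ∈ K, ((B+1) * A j) := Finset.prod_le_prod' hstep
          _ = (B+1)^(c-1) * ∏ j ∈ K, A j := by
              rw [Finset.prod_mul_distrib, Finset.prod_const, hcard]
      have key : (P * B^(c-1)) * ∏ j ∈ K, A j ≤ (2 * (B+1)^(c-1)) * ∏ j ∈ K, A j := by
        calc (P * B^(c-1)) * ∏ j ∈ K, A j = (P * ∏ j ∈ K, A j) * B^(c-1) := by ring
          _ ≤ (2 * ∏ j ∈ K, (A j + 1)) * B^(c-1) := Nat.mul_le_mul_right _ hP2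
          _ = 2 * (B^(c-1) * ∏ j ∈ K, (A j + 1)) := by ring
          _ ≤ 2 * ((B+1)^(c-1) * ∏ j ∈ K, A j) := Nat.mul_le_mul_left _ hh
          _ = (2 * (B+1)^(c-1)) * ∏ j ∈ K, A j := by ring
      exact Nat.le_of_mul_le_mul_right key hprodK_pos
    have hPσ : σ + 1 ≤ P + m := by rw [← hσs]; exact sum_add_one_le_prod_add s m hs1
    have hPbig : 2*(c-1) + 3 ≤ P := by omega
    by_cases hcase : c - 1 ≤ B
    · -- large B case: Bernoulli gives P*(B+1-(c-1)) ≤ 2(B+1), contradiction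
      have hbern := nat_bern B (c-1) (by omega)
      have hPB : P * (B + 1 - (c-1)) ≤ 2 * (B+1) := by
        have key : (P * (B+1-(c-1))) * B^(c-1) ≤ (2 * (B+1)) * B^(c-1) := by
          calc (P * (B+1-(c-1))) * B^(c-1) = (P * B^(c-1)) * (B+1-(c-1)) := by ring
            _ ≤ (2 * (B+1)^(c-1)) * (B+1-(c-1)) := Nat.mul_le_mul_right _ hP3
            _ = 2 * ((B+1)^(c-1) * (B+1-(c-1))) := by ring
            _ ≤ 2 * ((B+1) * B^(c-1)) := Nat.mul_le_mul_left _ hbern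
            _ = (2*(B+1)) * B^(c-1) := by ring
        exact Nat.le_of_mul_le_mul_right key (by positivity)
      obtain ⟨t, ht⟩ := Nat.exists_eq_add_of_le hcase
      have he' : B + 1 - (c-1) = t + 1 := by omega
      rw [he', ht] at hPB
      have h5 : (2*(c-1)+3) * (t+1) ≤ P * (t+1) := Nat.mul_le_mul_right _ hPbig
      have h6 : (2*(c-1)+3) * (t+1) ≤ 2*(c-1+t+1) := le_trans h5 hPB
      obtain ⟨w, hw⟩ : ∃ w, (c-1)*t = w := ⟨_, rfl⟩
      have hexp : (2*(c-1)+3) * (t+1) = 2*w + 2*(c-1) + 3*t + 3 := by rw [← hw]; ring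
      rw [hexp] at h6
      omega
    · -- small B case
      push_neg at hcase
      have hkB : B + 1 ≤ c - 1 := by omega
      have hsm : (∑ i ∈ Finset.range m, (s i - 1)) + m = σ := by
        have hthis : ∑ i ∈ Finset.range m, ((s i - 1) + 1) = σ := by
          rw [← hσs]
          exact Finset.sum_congr rfl
            (fun i hi => by have := hs1 i (Finset.mem_range.mp hi); omega)
        rw [Finset.sum_add_distrib, Finset.sum_const, Finset.card_range, smul_eq_mul,
          mul_one] at hthis
        exact hthis
      have hL4p : B^(2*(c-1)+2) ≤ P^(B-1) := by
        have h6 : ∀ i ∈ Finset.range m, B^(s i - 1) ≤ (s i)^(B-1) := by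
          intro i hi
          have h7 := hsB i (Finset.mem_range.mp hi)
          have h8 := hs1 i (Finset.mem_range.mp hi)
          have h9 := L4 (s i - 1) (B - 1) (by omega)
          have e1 : B - 1 + 1 = B := by omega
          have e2 : s i - 1 + 1 = s i := by omega
          rwa [e1, e2] at h9
        calc B^(2*(c-1)+2) ≤ B^(σ - m) := Nat.pow_le_pow_right (by omega) (by omega)
          _ = B^(∑ i ∈ Finset.range m, (s i - 1)) := by congr 1; omega
          _ = ∏ i ∈ Finset.range m, B^(s i - 1) := (Finset.prod_pow_eq_pow_sum _ _ _).symm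
          _ ≤ ∏ i ∈ Finset.range m, (s i)^(B-1) := Finset.prod_le_prod' h6
          _ = P^(B-1) := by rw [← Finset.prod_pow]
      have h9 : (P * B^(c-1))^(B-1) ≤ (2 * (B+1)^(c-1))^(B-1) := Nat.pow_le_pow_left hP3 _
      have hmulk : (c-1)*(B-1) + (c-1) = (c-1)*B := by
        rw [← Nat.mul_succ]
        congr 1
        omega
      have h10 : B^((c-1)*B+(c-1)+2) ≤ 2^(B-1) * (B+1)^((c-1)*(B-1)) := by
        calc B^((c-1)*B+(c-1)+2) = B^(2*(c-1)+2) * B^((c-1)*(B-1)) := by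
              rw [← pow_add]; congr 1; omega
          _ ≤ P^(B-1) * B^((c-1)*(B-1)) := Nat.mul_le_mul_right _ hL4p
          _ = (P * B^(c-1))^(B-1) := by rw [mul_pow, pow_mul]
          _ ≤ (2 * (B+1)^(c-1))^(B-1) := h9
          _ = 2^(B-1) * (B+1)^((c-1)*(B-1)) := by rw [mul_pow, pow_mul]
      exact absurd h10 (Nat.not_le.mpr (claim3 B (c-1) hB2 hkB))

lemma sum_Icc_reflect (f : ℕ → ℕ) (c : ℕ) :
    ∑ j ∈ Finset.Icc 1 c, f j = ∑ k ∈ Finset.range c, f (c - k) := by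
  rw [← Finset.Ico_add_one_right_eq_Icc, Finset.sum_Ico_eq_sum_range]
  have h := Finset.sum_range_reflect (fun j => f (c - j)) c
  simp only [Nat.add_sub_cancel] at h ⊢
  rw [← h]
  exact Finset.sum_congr rfl fun j hj => by
    have := Finset.mem_range.mp hj
    congr 1
    omega

lemma prod_Icc_reflect (f : ℕ → ℕ) (c : ℕ) :
    ∏ j ∈ Finset.Icc 1 c, f j = ∏ k ∈ Finset.range c, f (c - k) := by
  rw [← Finset.Ico_add_one_right_eq_Icc, Finset.prod_Ico_eq_prod_range]
  have h := Finset.prod_range_reflect (fun j => f (c - j)) c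
  simp only [Nat.add_sub_cancel] at h ⊢
  rw [← h]
  exact Finset.prod_congr rfl fun j hj => by
    have := Finset.mem_range.mp hj
    congr 1
    omega

lemma sum_top_reflect (a : ℕ → ℕ) (n c : ℕ) (hc : c ≤ n + 1) :
    ∑ i ∈ Finset.Ico (n+1-c) (n+1), a i = ∑ k ∈ Finset.range c, a (n - k) := by
  rw [Finset.sum_Ico_eq_sum_range]
  have he : n + 1 - (n+1-c) = c := by omega
  rw [he]
  have h := Finset.sum_range_reflect (fun j => a (n - j)) c
  rw [← h]
  exact Finset.sum_congr rfl fun j hj => by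
    have := Finset.mem_range.mp hj
    congr 1
    omega

lemma prod_top_reflect (a : ℕ → ℕ) (n c : ℕ) (hc : c ≤ n + 1) :
    ∏ i ∈ Finset.Ico (n+1-c) (n+1), a i = ∏ k ∈ Finset.range c, a (n - k) := by
  rw [Finset.prod_Ico_eq_prod_range]
  have he : n + 1 - (n+1-c) = c := by omega
  rw [he]
  have h := Finset.prod_range_reflect (fun j => a (n - j)) c
  rw [← h]
  exact Finset.prod_congr rfl fun j hj => by
    have := Finset.mem_range.mp hj
    congr 1
    omega

/-- numerical content of the Calabi–Yau case of the main
theorem.  Weights are encoded as `a : ℕ → ℕ` with relevant values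
`a 0, …, a n`, and degrees as `d : ℕ → ℕ` with relevant values `d 1, …, d c`.
Let `n ≥ 2`, `c ≥ 1`, `n + 2 ≥ 2c + 1`, with `a_0 ≤ … ≤ a_n` and
`d_1 ≤ … ≤ d_c` positive integers such that `d_c ≥ 2a_n`,
`d_{c-k} > a_{n-k}` for all `1 ≤ k ≤ c-1`, `a_0⋯a_n ≤ d_1⋯d_c`, and
`a_0 + … + a_n = d_1 + … + d_c`.  Then `a_i ≤ n + 1` for every `0 ≤ i ≤ n`
and `d_j ≤ (n+1)²` for every `1 ≤ j ≤ c`. -/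
theorem stmt_11 (n c : ℕ) (hn : 2 ≤ n) (hc : 1 ≤ c) (hnc : 2 * c + 1 ≤ n + 2)
    (a d : ℕ → ℕ)
    (ha_pos : ∀ i : ℕ, i ≤ n → 0 < a i)
    (hd_pos : ∀ j : ℕ, 1 ≤ j → j ≤ c → 0 < d j)
    (ha_mono : ∀ i j : ℕ, i ≤ j → j ≤ n → a i ≤ a j)
    (hd_mono : ∀ i j : ℕ, 1 ≤ i → i ≤ j → j ≤ c → d i ≤ d j)
    (hdc : 2 * a n ≤ d c)
    (hk : ∀ k : ℕ, 1 ≤ k → k ≤ c - 1 → a (n - k) < d (c - k))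
    (hprod : ∏ i ∈ Finset.range (n + 1), a i ≤ ∏ j ∈ Finset.Icc 1 c, d j)
    (hsum : ∑ i ∈ Finset.range (n + 1), a i = ∑ j ∈ Finset.Icc 1 c, d j) :
    (∀ i : ℕ, i ≤ n → a i ≤ n + 1) ∧
      (∀ j : ℕ, 1 ≤ j → j ≤ c → d j ≤ (n + 1) ^ 2) := by
  have hcn : c ≤ n + 1 := by omega
  set m := n + 1 - c with hm
  have hm1 : 1 ≤ m := by omega
  have hmn : m ≤ n := by omega
  -- termwise bound a(n-k) ≤ d(c-k)
  have hde : ∀ k, k < c → a (n - k) ≤ d (c - k) := by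
    intro k hkc
    rcases Nat.eq_zero_or_pos k with rfl | hk1
    · simp only [Nat.sub_zero]
      omega
    · exact le_of_lt (hk k hk1 (by omega))
  set e : ℕ → ℕ := fun k => d (c - k) - a (n - k) with he
  -- reindexing
  have hdsum := sum_Icc_reflect d c
  have hdprod := prod_Icc_reflect d c
  have hasplit : (∑ i ∈ Finset.range m, a i) + (∑ i ∈ Finset.Ico m (n+1), a i)
      = ∑ i ∈ Finset.range (n+1), a i := Finset.sum_range_add_sum_Ico a (by omega)
  have hasplit' : (∏ i ∈ Finset.range m, a i) * (∏ i ∈ Finset.Ico m (n+1), a i)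
      = ∏ i ∈ Finset.range (n+1), a i := Finset.prod_range_mul_prod_Ico a (by omega)
  have htop : ∑ i ∈ Finset.Ico m (n+1), a i = ∑ k ∈ Finset.range c, a (n - k) := by
    rw [hm]; exact sum_top_reflect a n c hcn
  have htop' : ∏ i ∈ Finset.Ico m (n+1), a i = ∏ k ∈ Finset.range c, a (n - k) := by
    rw [hm]; exact prod_top_reflect a n c hcn
  -- sum of e
  have heA : ∀ k ∈ Finset.range c, a (n-k) + e k = d (c-k) := fun k hkc => by
    rw [he]
    exact Nat.add_sub_cancel' (hde k (Finset.mem_range.mp hkc))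
  have hesplit : (∑ k ∈ Finset.range c, a (n-k)) + (∑ k ∈ Finset.range c, e k)
      = ∑ k ∈ Finset.range c, d (c-k) := by
    rw [← Finset.sum_add_distrib]
    exact Finset.sum_congr rfl heA
  have hσe : ∑ k ∈ Finset.range c, e k = ∑ i ∈ Finset.range m, a i := by omega
  -- product hypothesis
  have hprod' : (∏ i ∈ Finset.range m, a i) * (∏ k ∈ Finset.range c, a (n-k)) ≤
      ∏ k ∈ Finset.range c, (a (n-k) + e k) := by
    calc (∏ i ∈ Finset.range m, a i) * (∏ k ∈ Finset.range c, a (n-k))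
        = ∏ i ∈ Finset.range (n+1), a i := by rw [← htop', hasplit']
      _ ≤ ∏ j ∈ Finset.Icc 1 c, d j := hprod
      _ = ∏ k ∈ Finset.range c, d (c-k) := hdprod
      _ = ∏ k ∈ Finset.range c, (a (n-k) + e k) := (Finset.prod_congr rfl heA).symm
  -- apply the key lemma
  have han : a n ≤ n + 1 := by
    have hkey := key_lemma (∑ i ∈ Finset.range m, a i) m c (a m)
      a (fun k => a (n - k)) e hc hm1
      (fun i hi => ha_pos i (by omega))
      (fun i hi => ha_mono i m (by omega) hmn)
      (fun k hkc => ha_mono m (n - k) (by omega) (by omega))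
      (by
        simp only [Nat.sub_zero, he]
        omega)
      (fun k hk1 hkc => by
        have := hk k hk1 (by omega)
        simp only [he]
        omega)
      rfl hσe hprod'
    simp only [Nat.sub_zero] at hkey
    omega
  have hS : ∑ i ∈ Finset.range (n+1), a i ≤ (n+1) * (n+1) := by
    calc ∑ i ∈ Finset.range (n+1), a i ≤ ∑ _i ∈ Finset.range (n+1), (n+1) :=
          Finset.sum_le_sum fun i hi =>
            le_trans (ha_mono i n (Nat.lt_succ_iff.mp (Finset.mem_range.mp hi)) le_rfl) han
      _ = (n+1) * (n+1) := by rw [Finset.sum_const, Finset.card_range, smul_eq_mul]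
  constructor
  · intro i hi
    exact le_trans (ha_mono i n hi le_rfl) han
  · intro j hj1 hjc
    calc d j ≤ d c := hd_mono j c hj1 hjc le_rfl
      _ ≤ ∑ j ∈ Finset.Icc 1 c, d j :=
          Finset.single_le_sum (fun j _ => Nat.zero_le _) (Finset.mem_Icc.mpr ⟨hc, le_rfl⟩)
      _ = ∑ i ∈ Finset.range (n+1), a i := hsum.symm
      _ ≤ (n+1) * (n+1) := hS
      _ = (n+1)^2 := (sq (n+1)).symm
end

section
/- Let a_0, a_1, …, a_n and d_1, …, d_c be positive integers. Suppose that for every prime number p and every positive integer r, the number of indices i ∈ {0,…,n} such that p^r divides a_i is at most the number of indices j ∈ {1,…,c} such that p^r divides d_j. Then the product a_0·a_1·…·a_n divides the product d_1·…·d_c. -/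
open Finset

/-- Counting lemma: the `p`-adic valuation of `m` equals the number of `r ∈ [1, N]`
with `p ^ r ∣ m`, provided `N` is at least the valuation. -/
lemma count_pow_dvd (p m N : ℕ) (hp : p.Prime) (hm : m ≠ 0)
    (hN : m.factorization p ≤ N) :
    ((Finset.Icc 1 N).filter (fun r => p ^ r ∣ m)).card = m.factorization p := by
  have : (Finset.Icc 1 N).filter (fun r => p ^ r ∣ m)
      = Finset.Icc 1 (m.factorization p) := by
    ext r
    simp only [mem_filter, mem_Icc]
    rw [Nat.Prime.pow_dvd_iff_le_factorization hp hm]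
    omega
  rw [this, Nat.card_Icc]
  omega

/-- Let `a_0, …, a_n` and `d_1, …, d_c` be positive
integers (encoded as `a d : ℕ → ℕ` with relevant values `a 0, …, a n` and
`d 1, …, d c`).  Suppose that for every prime `p` and every positive integer
`r`, the number of indices `i ∈ {0, …, n}` with `p ^ r ∣ a_i` is at most the
number of indices `j ∈ {1, …, c}` with `p ^ r ∣ d_j`.  Then
`a_0 ⋯ a_n ∣ d_1 ⋯ d_c`. -/
theorem stmt_12 (n c : ℕ) (a d : ℕ → ℕ)
    (ha_pos : ∀ i : ℕ, i ≤ n → 0 < a i)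
    (hd_pos : ∀ j : ℕ, 1 ≤ j → j ≤ c → 0 < d j)
    (h : ∀ p r : ℕ, p.Prime → 1 ≤ r →
      (((Finset.range (n + 1)).filter (fun i => p ^ r ∣ a i)).card ≤
        ((Finset.Icc 1 c).filter (fun j => p ^ r ∣ d j)).card)) :
    (∏ i ∈ Finset.range (n + 1), a i) ∣ ∏ j ∈ Finset.Icc 1 c, d j := by
  have ha : ∀ i ∈ Finset.range (n + 1), a i ≠ 0 := fun i hi =>
    (ha_pos i (by simpa [Nat.lt_succ_iff] using hi)).ne'
  have hd : ∀ j ∈ Finset.Icc 1 c, d j ≠ 0 := fun j hj => by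
    rw [mem_Icc] at hj; exact (hd_pos j hj.1 hj.2).ne'
  have hA : (∏ i ∈ Finset.range (n + 1), a i) ≠ 0 := Finset.prod_ne_zero_iff.2 ha
  have hD : (∏ j ∈ Finset.Icc 1 c, d j) ≠ 0 := Finset.prod_ne_zero_iff.2 hd
  rw [← Nat.factorization_le_iff_dvd hA hD]
  intro p
  by_cases hp : p.Prime
  · -- choose N large enough
    set N := (∏ i ∈ Finset.range (n + 1), a i) + (∏ j ∈ Finset.Icc 1 c, d j) with hNdef
    have hNa : ∀ i ∈ Finset.range (n + 1), (a i).factorization p ≤ N := by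
      intro i hi
      calc (a i).factorization p ≤ a i := Nat.factorization_lt _ (ha i hi) |>.le
        _ ≤ ∏ i ∈ Finset.range (n + 1), a i :=
            Finset.single_le_prod' (fun j hj => (Nat.pos_of_ne_zero (ha j hj))) hi
        _ ≤ N := Nat.le_add_right _ _
    have hNd : ∀ j ∈ Finset.Icc 1 c, (d j).factorization p ≤ N := by
      intro j hj
      calc (d j).factorization p ≤ d j := Nat.factorization_lt _ (hd j hj) |>.le
        _ ≤ ∏ j ∈ Finset.Icc 1 c, d j :=
            Finset.single_le_prod' (fun k hk => (Nat.pos_of_ne_zero (hd k hk))) hj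
        _ ≤ N := Nat.le_add_left _ _
    rw [Nat.factorization_prod ha, Nat.factorization_prod hd]
    simp only [Finsupp.coe_finset_sum, Finset.sum_apply]
    calc ∑ i ∈ Finset.range (n + 1), (a i).factorization p
        = ∑ i ∈ Finset.range (n + 1),
            ((Finset.Icc 1 N).filter (fun r => p ^ r ∣ a i)).card := by
          refine Finset.sum_congr rfl fun i hi => ?_
          exact (count_pow_dvd p (a i) N hp (ha i hi) (hNa i hi)).symm
      _ = ∑ r ∈ Finset.Icc 1 N,
            ((Finset.range (n + 1)).filter (fun i => p ^ r ∣ a i)).card := by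
          simp only [Finset.card_filter]
          exact Finset.sum_comm
      _ ≤ ∑ r ∈ Finset.Icc 1 N,
            ((Finset.Icc 1 c).filter (fun j => p ^ r ∣ d j)).card := by
          refine Finset.sum_le_sum fun r hr => ?_
          exact h p r hp (mem_Icc.1 hr).1
      _ = ∑ j ∈ Finset.Icc 1 c,
            ((Finset.Icc 1 N).filter (fun r => p ^ r ∣ d j)).card := by
          simp only [Finset.card_filter]
          exact Finset.sum_comm
      _ = ∑ j ∈ Finset.Icc 1 c, (d j).factorization p := by
          refine Finset.sum_congr rfl fun j hj => ?_
          exact count_pow_dvd p (d j) N hp (hd j hj) (hNd j hj)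
  · simp [Nat.factorization_eq_zero_of_not_prime _ hp]
end
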